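/- arXiv:2210.10257 — 8 statements merged into one kernel-verified Lean document; each statement's English description precedes it below -/
import Mathlib

section
/- Let a, b, c, d ∈ ℚ and suppose f(x) = x⁴ + a·x³ + b·x² + c·x + d is irreducible over ℚ. Then the power compositional octic polynomial f(x²) = x⁸ + a·x⁶ + b·x⁴ + c·x² + d is reducible over ℚ if and only if there exist k, ℓ, m, n ∈ ℚ such that a = 2ℓ − k², b = 2n − 2km + ℓ², c = 2ℓn − m², and d = n². -/
/-!
Let `g` be a monic factor of `f(X²)` and `g* = ±g(-X)`. The product `g g*` is even, so it is
`e(X²)` for a monic `e` with `deg e = deg g`. As `g` divides both `f(X²)` and `e(X²)`, and expansion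
`p ↦ p(X²)` preserves coprimality, `f` and `e` are not coprime; irreducibility gives `f ∣ e`.
If `f(X²)` is reducible we may take `0 < deg g ≤ deg f`, so `e = f` and `f(X²) = g g*`.
For `g = X⁴ + kX³ + ℓX² + mX + n` the coefficients of `g g*` are the displayed expressions.
-/

open Polynomial

namespace Polynomial

section CommRing

variable {R : Type*} [CommRing R]

noncomputable def signedCompNegX (g : R[X]) : R[X] := (-1) ^ g.natDegree * g.comp (-X)

theorem coeff_comp_neg_X (p : R[X]) (n : ℕ) : (p.comp (-X)).coeff n = (-1) ^ n * p.coeff n := by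
  rw [show (-X : R[X]) = C (-1) * X by simp, comp_C_mul_X_coeff, mul_comm]

theorem mul_signedCompNegX_comp_neg_X (g : R[X]) :
    (g * g.signedCompNegX).comp (-X) = g * g.signedCompNegX := by
  simp only [signedCompNegX, mul_comp, comp_neg_X_comp_neg_X, pow_comp, neg_comp, one_comp]
  ring

theorem Monic.signedCompNegX {g : R[X]} (hg : g.Monic) : g.signedCompNegX.Monic :=
  hg.neg_one_pow_natDegree_mul_comp_neg_X

theorem natDegree_signedCompNegX [NoZeroDivisors R] (g : R[X]) :
    g.signedCompNegX.natDegree = g.natDegree := by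
  nontriviality R
  rw [signedCompNegX, show ((-1 : R[X]) ^ g.natDegree) = C ((-1) ^ g.natDegree) by simp,
    natDegree_C_mul (by simp), natDegree_comp]
  simp

theorem Monic.natDegree_mul_signedCompNegX [NoZeroDivisors R] {g : R[X]} (hg : g.Monic) :
    (g * g.signedCompNegX).natDegree = g.natDegree * 2 := by
  rw [hg.natDegree_mul hg.signedCompNegX, natDegree_signedCompNegX, mul_two]

theorem expand_contract_two_of_comp_neg_X_eq [NoZeroDivisors R] [NeZero (2 : R)] {p : R[X]}
    (hp : p.comp (-X) = p) : expand R 2 (contract 2 p) = p := by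
  ext n
  rw [coeff_expand two_pos, coeff_contract two_ne_zero]
  split_ifs with h
  · rw [Nat.div_mul_cancel h]
  · have hn : (-1) ^ n * p.coeff n = p.coeff n := by rw [← coeff_comp_neg_X, hp]
    rw [Odd.neg_one_pow (Nat.odd_iff.mpr (by omega)), neg_one_mul, neg_eq_iff_add_eq_zero,
      ← two_mul, mul_eq_zero] at hn
    exact (hn.resolve_left two_ne_zero).symm

end CommRing

section Field

variable {K : Type*} [Field K] [NeZero (2 : K)]

theorem mul_signedCompNegX_eq_expand_of_dvd {f g : K[X]} (hf : Irreducible f) (hfm : f.Monic)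
    (hgm : g.Monic) (hg0 : 0 < g.natDegree) (hgf : g.natDegree ≤ f.natDegree)
    (hdvd : g ∣ expand K 2 f) : g * g.signedCompNegX = expand K 2 f := by
  set e := contract 2 (g * g.signedCompNegX)
  have he : expand K 2 e = g * g.signedCompNegX :=
    expand_contract_two_of_comp_neg_X_eq (mul_signedCompNegX_comp_neg_X g)
  have hem : e.Monic := (monic_expand_iff two_pos).mp (he ▸ hgm.mul hgm.signedCompNegX)
  have hedeg : e.natDegree = g.natDegree := by
    have := congrArg natDegree he
    rw [natDegree_expand, hgm.natDegree_mul_signedCompNegX] at this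
    omega
  have hfe : f ∣ e := by
    rw [← hf.coprime_iff_not_dvd.not_left, ← isCoprime_expand two_ne_zero]
    intro hcop
    have := natDegree_eq_zero_of_isUnit (hcop.isUnit_of_dvd' hdvd (he ▸ dvd_mul_right g _))
    omega
  rw [← he, eq_of_monic_of_dvd_of_natDegree_le hfm hem hfe (hedeg ▸ hgf)]

theorem not_irreducible_expand_two_iff {f : K[X]} (hf : Irreducible f) (hfm : f.Monic) :
    ¬Irreducible (expand K 2 f) ↔
      ∃ g : K[X], g.Monic ∧ g.natDegree = f.natDegree ∧ g * g.signedCompNegX = expand K 2 f := by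
  constructor
  · intro hF
    have hF1 : expand K 2 f ≠ 1 := fun h => by
      simpa [natDegree_expand, hf.natDegree_pos.ne'] using congrArg natDegree h
    rw [(hfm.expand two_pos).irreducible_iff_natDegree', natDegree_expand] at hF
    push Not at hF
    obtain ⟨q, g, -, hgm, hqg, hg⟩ := hF hF1
    rw [Finset.mem_Ioc, Nat.mul_div_cancel _ two_pos] at hg
    have hprod := mul_signedCompNegX_eq_expand_of_dvd hf hfm hgm hg.1 hg.2 (hqg ▸ dvd_mul_left g q)
    refine ⟨g, hgm, ?_, hprod⟩
    have := congrArg natDegree hprod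
    rw [natDegree_expand, hgm.natDegree_mul_signedCompNegX] at this
    omega
  · rintro ⟨g, hgm, hgf, hprod⟩ hF
    have hg0 : g.natDegree = 0 := by
      rcases hF.isUnit_or_isUnit hprod.symm with hu | hu
      · exact natDegree_eq_zero_of_isUnit hu
      · exact natDegree_signedCompNegX g ▸ natDegree_eq_zero_of_isUnit hu
    exact hf.natDegree_pos.ne' (hgf ▸ hg0)

end Field

section CommSemiring

variable {R : Type*} [CommSemiring R]

theorem Monic.eq_X_pow_four_add {g : R[X]} (hg : g.Monic) (h4 : g.natDegree = 4) :
    g = X ^ 4 + C (g.coeff 3) * X ^ 3 + C (g.coeff 2) * X ^ 2 + C (g.coeff 1) * X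
      + C (g.coeff 0) := by
  conv_lhs => rw [hg.as_sum, h4]
  simp only [Finset.sum_range_succ, Finset.sum_range_zero]
  ring

theorem X_pow_four_add_inj {a b c d a' b' c' d' : R} :
    X ^ 4 + C a * X ^ 3 + C b * X ^ 2 + C c * X + C d =
        (X ^ 4 + C a' * X ^ 3 + C b' * X ^ 2 + C c' * X + C d' : R[X]) ↔
      a = a' ∧ b = b' ∧ c = c' ∧ d = d' := by
  refine ⟨fun h => ⟨?_, ?_, ?_, ?_⟩, by rintro ⟨rfl, rfl, rfl, rfl⟩; rfl⟩
  · simpa using congrArg (coeff · 3) h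
  · simpa using congrArg (coeff · 2) h
  · simpa using congrArg (coeff · 1) h
  · simpa using congrArg (coeff · 0) h

end CommSemiring

section Quartic

variable {R : Type*} [CommRing R] [Nontrivial R] (k l m n : R)

theorem signedCompNegX_X_pow_four_add :
    (X ^ 4 + C k * X ^ 3 + C l * X ^ 2 + C m * X + C n : R[X]).signedCompNegX =
      X ^ 4 + C (-k) * X ^ 3 + C l * X ^ 2 + C (-m) * X + C n := by
  have h4 : (X ^ 4 + C k * X ^ 3 + C l * X ^ 2 + C m * X + C n : R[X]).natDegree = 4 := by
    compute_degree!
  simp only [signedCompNegX, h4, add_comp, mul_comp, pow_comp, C_comp, X_comp, map_neg]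
  ring

theorem X_pow_four_add_mul_signedCompNegX :
    (X ^ 4 + C k * X ^ 3 + C l * X ^ 2 + C m * X + C n : R[X]) *
        (X ^ 4 + C k * X ^ 3 + C l * X ^ 2 + C m * X + C n).signedCompNegX =
      expand R 2 (X ^ 4 + C (2 * l - k ^ 2) * X ^ 3 + C (2 * n - 2 * k * m + l ^ 2) * X ^ 2
        + C (2 * l * n - m ^ 2) * X + C (n ^ 2)) := by
  simp only [signedCompNegX_X_pow_four_add, map_add, map_mul, map_pow, expand_X, expand_C, map_neg,
    map_sub, map_ofNat]
  ring

end Quartic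

end Polynomial

theorem stmt0 (a b c d : ℚ)
    (hf : Irreducible (X ^ 4 + C a * X ^ 3 + C b * X ^ 2 + C c * X + C d : ℚ[X])) :
    ¬ Irreducible (X ^ 8 + C a * X ^ 6 + C b * X ^ 4 + C c * X ^ 2 + C d : ℚ[X]) ↔
      ∃ k l m n : ℚ, a = 2 * l - k ^ 2 ∧ b = 2 * n - 2 * k * m + l ^ 2 ∧
        c = 2 * l * n - m ^ 2 ∧ d = n ^ 2 := by
  have hexpand : (X ^ 8 + C a * X ^ 6 + C b * X ^ 4 + C c * X ^ 2 + C d : ℚ[X]) =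
      expand ℚ 2 (X ^ 4 + C a * X ^ 3 + C b * X ^ 2 + C c * X + C d) := by
    simp only [map_add, map_mul, map_pow, expand_X, expand_C]
    ring
  have hdeg : (X ^ 4 + C a * X ^ 3 + C b * X ^ 2 + C c * X + C d : ℚ[X]).natDegree = 4 := by
    compute_degree!
  rw [hexpand, not_irreducible_expand_two_iff hf (by monicity!), hdeg]
  constructor
  · rintro ⟨g, hgm, hg4, hprod⟩
    rw [hgm.eq_X_pow_four_add hg4, X_pow_four_add_mul_signedCompNegX, expand_inj two_pos,
      X_pow_four_add_inj] at hprod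
    obtain ⟨ha, hb, hc, hd⟩ := hprod
    exact ⟨_, _, _, _, ha.symm, hb.symm, hc.symm, hd.symm⟩
  · rintro ⟨k, l, m, n, rfl, rfl, rfl, rfl⟩
    exact ⟨_, by monicity!, by compute_degree!, X_pow_four_add_mul_signedCompNegX k l m n⟩
end

section
/- Let a, c ∈ ℚ with c ≥ 0, set b = c², and suppose f(x) = x⁸ + a·x⁴ + b is irreducible over ℚ. Define R₁(x) = x⁴ + (2a + 12c)·x² + (a − 2c)², R₂(x) = x⁴ + (2a − 12c)·x² + (a + 2c)², and R₃(x) = x⁴ − 4a·x² + 16b. Then: (1) R₁(x) is irreducible over ℚ if and only if 2b + ac is not a square in ℚ; (2) R₂(x) is irreducible over ℚ if and only if c is not a square in ℚ and 2b − ac is not a square in ℚ; (3) R₃(x) is irreducible over ℚ if and only if a − 2c is not a square in ℚ and a + 2c is not a square in ℚ. -/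
open Polynomial

/-!
A monic biquadratic `X⁴ + pX² + q` over a field of characteristic `≠ 2` is reducible exactly when
it has a root or splits into two monic quadratics. Comparing coefficients, a quadratic factorization
is either `(X² + u)(X² + v)` with `u + v = p`, `uv = q`, i.e. `p² - 4q` is a square, or
`(X² + mX + s)(X² - mX + s)` with `s² = q`, `m² = 2s - p`; a root `r` also makes `p² - 4q` the
square of `p + 2r²`. Each `Rᵢ` has a square constant term `w²`, so `s = ±w` and reducibility becomes
a disjunction of three square conditions. Since `f(X) = Q(X²)` with `Q = X⁴ + aX² + c²`, `Q` is
irreducible, which rules out `a² - 4c²`, `2c - a` and `-2c - a` being squares; this removes one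
condition for each `Rᵢ` and leaves the stated ones (for `R₁`, `-c` a square forces `c = 0`).
-/

namespace Polynomial

section CommRing

variable {R : Type*} [CommRing R]

theorem Monic.eq_X_sq_add_C_mul_X_add_C {f : R[X]} (hf : f.Monic) (hd : f.natDegree = 2) :
    f = X ^ 2 + C (f.coeff 1) * X + C (f.coeff 0) := by
  conv_lhs => rw [hf.as_sum, hd]
  simp only [Finset.sum_range_succ, Finset.range_one, Finset.sum_singleton, pow_zero, mul_one,
    pow_one]
  ring

theorem quadratic_mul_quadratic_eq_biquadratic_iff {m s n t p q : R} :
    (X ^ 2 + C m * X + C s) * (X ^ 2 + C n * X + C t) = X ^ 4 + C p * X ^ 2 + C q ↔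
      m + n = 0 ∧ s + t + m * n = p ∧ m * t + n * s = 0 ∧ s * t = q := by
  have expand : (X ^ 2 + C m * X + C s) * (X ^ 2 + C n * X + C t) =
      X ^ 4 + C (m + n) * X ^ 3 + C (s + t + m * n) * X ^ 2 + C (m * t + n * s) * X +
        C (s * t) := by
    simp only [map_add, map_mul]; ring
  rw [expand]
  constructor
  · intro h
    have h3 := congrArg (coeff · 3) h
    have h2 := congrArg (coeff · 2) h
    have h1 := congrArg (coeff · 1) h
    have h0 := congrArg (coeff · 0) h
    simp only [coeff_add, coeff_C_mul_X_pow, coeff_C_mul_X, coeff_X_pow, coeff_C] at h3 h2 h1 h0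
    norm_num at h3 h2 h1 h0
    exact ⟨h3, h2, h1, h0⟩
  · rintro ⟨h3, h2, h1, h0⟩
    rw [h3, h2, h1, h0]
    simp

end CommRing

variable {K : Type*} [Field K]

theorem not_irreducible_biquadratic_iff (h2 : (2 : K) ≠ 0) (p q : K) :
    ¬ Irreducible (X ^ 4 + C p * X ^ 2 + C q) ↔
      (∃ t, p ^ 2 - 4 * q = t ^ 2) ∨ ∃ s m, q = s ^ 2 ∧ 2 * s - p = m ^ 2 := by
  have hmon : (X ^ 4 + C p * X ^ 2 + C q).Monic := by monicity!
  have hdeg : (X ^ 4 + C p * X ^ 2 + C q).natDegree = 4 := by compute_degree!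
  have hne : X ^ 4 + C p * X ^ 2 + C q ≠ 1 := fun h ↦ by simp [h] at hdeg
  rw [hmon.irreducible_iff_natDegree', and_iff_right hne, hdeg]
  have natDegree_quadratic (m s : K) : (X ^ 2 + C m * X + C s).natDegree = 2 := by
    compute_degree!
  push Not
  constructor
  · rintro ⟨f, g, hf, hg, hfg, hgdeg⟩
    obtain hg1 | hg2 : g.natDegree = 1 ∨ g.natDegree = 2 := by simp at hgdeg; omega
    · have hroot : (X ^ 4 + C p * X ^ 2 + C q).eval (-g.coeff 0) = 0 := by
        rw [← hfg, hg.eq_X_add_C hg1]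
        simp
      simp only [eval_add, eval_pow, eval_X, eval_mul, eval_C, even_two, Even.neg_pow] at hroot
      exact .inl ⟨p + 2 * g.coeff 0 ^ 2, by linear_combination (-4) * hroot⟩
    · have hf2 : f.natDegree = 2 := by
        have := hf.natDegree_mul hg
        rw [hfg, hdeg] at this
        omega
      rw [hf.eq_X_sq_add_C_mul_X_add_C hf2, hg.eq_X_sq_add_C_mul_X_add_C hg2,
        quadratic_mul_quadratic_eq_biquadratic_iff] at hfg
      -- `m + n = 0` and `mt + ns = 0` force `m = n = 0` or `n = -m, t = s`
      obtain ⟨e3, e2, e1, e0⟩ := hfg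
      rcases eq_or_ne (f.coeff 1) 0 with hm0 | hm0
      · left
        refine ⟨f.coeff 0 - g.coeff 0, ?_⟩
        have hn0 : g.coeff 1 = 0 := by linear_combination e3 - hm0
        rw [← e2, ← e0, hm0, hn0]
        ring
      · right
        have hts : g.coeff 0 = f.coeff 0 := by
          have : f.coeff 1 * (g.coeff 0 - f.coeff 0) = 0 := by
            linear_combination e1 - f.coeff 0 * e3
          exact sub_eq_zero.mp ((mul_eq_zero.mp this).resolve_left hm0)
        refine ⟨f.coeff 0, f.coeff 1, by rw [← e0, hts]; ring, ?_⟩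
        linear_combination e2 - hts - f.coeff 1 * e3
  · rintro (⟨t, ht⟩ | ⟨s, m, rfl, hm⟩)
    · refine ⟨X ^ 2 + C 0 * X + C ((p + t) / 2), X ^ 2 + C 0 * X + C ((p - t) / 2),
        by monicity!, by monicity!, ?_, by rw [natDegree_quadratic]; decide⟩
      rw [quadratic_mul_quadratic_eq_biquadratic_iff]
      refine ⟨by ring, by field_simp; ring, by ring, by field_simp; linear_combination ht⟩
    · refine ⟨X ^ 2 + C m * X + C s, X ^ 2 + C (-m) * X + C s,
        by monicity!, by monicity!, ?_, by rw [natDegree_quadratic]; decide⟩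
      rw [quadratic_mul_quadratic_eq_biquadratic_iff]
      refine ⟨by ring, by linear_combination hm, by ring, by ring⟩

theorem not_irreducible_biquadratic_sq_iff (h2 : (2 : K) ≠ 0) (p w : K) :
    ¬ Irreducible (X ^ 4 + C p * X ^ 2 + C (w ^ 2)) ↔
      (∃ t, p ^ 2 - 4 * w ^ 2 = t ^ 2) ∨ (∃ m, 2 * w - p = m ^ 2) ∨ ∃ m, -2 * w - p = m ^ 2 := by
  rw [not_irreducible_biquadratic_iff h2]
  refine or_congr_right ⟨?_, ?_⟩
  · rintro ⟨s, m, hs, hm⟩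
    rcases sq_eq_sq_iff_eq_or_eq_neg.mp hs.symm with rfl | rfl
    · exact .inl ⟨m, hm⟩
    · exact .inr ⟨m, by linear_combination hm⟩
  · rintro (⟨m, hm⟩ | ⟨m, hm⟩)
    · exact ⟨w, m, rfl, hm⟩
    · exact ⟨-w, m, by ring, by linear_combination hm⟩

theorem not_exists_sq_of_irreducible_X_pow_eight (h2 : (2 : K) ≠ 0) {a c : K}
    (hf : Irreducible (X ^ 8 + C a * X ^ 4 + C (c ^ 2))) :
    (¬ ∃ t, a ^ 2 - 4 * c ^ 2 = t ^ 2) ∧ (¬ ∃ m, 2 * c - a = m ^ 2) ∧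
      ¬ ∃ m, -2 * c - a = m ^ 2 := by
  have hQ : Irreducible (X ^ 4 + C a * X ^ 2 + C (c ^ 2)) := by
    refine of_irreducible_expand two_ne_zero ?_
    simpa [expand_X, ← pow_mul] using hf
  simpa only [not_or] using (not_irreducible_biquadratic_sq_iff h2 a c).not.mp (not_not.mpr hQ)

end Polynomial

theorem exists_sq_mul_eq_sq_iff {K : Type*} [Field K] {d : K} (hd : d ≠ 0) (x : K) :
    (∃ r, d ^ 2 * x = r ^ 2) ↔ ∃ r, x = r ^ 2 := by
  refine ⟨fun ⟨r, hr⟩ ↦ ⟨r / d, ?_⟩, fun ⟨r, hr⟩ ↦ ⟨d * r, by rw [hr]; ring⟩⟩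
  field_simp
  linear_combination hr

theorem stmt3 (a c : ℚ) (hc : 0 ≤ c)
    (hf : Irreducible (X ^ 8 + C a * X ^ 4 + C (c ^ 2) : ℚ[X])) :
    (Irreducible (X ^ 4 + C (2 * a + 12 * c) * X ^ 2 + C ((a - 2 * c) ^ 2) : ℚ[X]) ↔
      ¬ ∃ r : ℚ, 2 * c ^ 2 + a * c = r ^ 2) ∧
    (Irreducible (X ^ 4 + C (2 * a - 12 * c) * X ^ 2 + C ((a + 2 * c) ^ 2) : ℚ[X]) ↔
      (¬ ∃ r : ℚ, c = r ^ 2) ∧ ¬ ∃ r : ℚ, 2 * c ^ 2 - a * c = r ^ 2) ∧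
    (Irreducible (X ^ 4 - C (4 * a) * X ^ 2 + C (16 * c ^ 2) : ℚ[X]) ↔
      (¬ ∃ r : ℚ, a - 2 * c = r ^ 2) ∧ ¬ ∃ r : ℚ, a + 2 * c = r ^ 2) := by
  obtain ⟨hdisc, hpos, hneg⟩ := not_exists_sq_of_irreducible_X_pow_eight two_ne_zero hf
  refine ⟨?_, ?_, ?_⟩
  · rw [← not_iff_not, not_not, not_irreducible_biquadratic_sq_iff two_ne_zero,
      show (2 * a + 12 * c) ^ 2 - 4 * (a - 2 * c) ^ 2 = 8 ^ 2 * (2 * c ^ 2 + a * c) by ring,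
      show 2 * (a - 2 * c) - (2 * a + 12 * c) = 4 ^ 2 * -c by ring,
      show -2 * (a - 2 * c) - (2 * a + 12 * c) = 2 ^ 2 * (-2 * c - a) by ring,
      exists_sq_mul_eq_sq_iff (by norm_num), exists_sq_mul_eq_sq_iff (by norm_num),
      exists_sq_mul_eq_sq_iff (by norm_num)]
    rw [or_iff_left hneg]
    refine or_iff_left_of_imp fun ⟨r, hr⟩ ↦ ⟨0, ?_⟩
    have hc0 : c = 0 := by nlinarith
    simp [hc0]
  · rw [← not_or, ← not_iff_not, not_not, not_irreducible_biquadratic_sq_iff two_ne_zero,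
      show (2 * a - 12 * c) ^ 2 - 4 * (a + 2 * c) ^ 2 = 8 ^ 2 * (2 * c ^ 2 - a * c) by ring,
      show 2 * (a + 2 * c) - (2 * a - 12 * c) = 4 ^ 2 * c by ring,
      show -2 * (a + 2 * c) - (2 * a - 12 * c) = 2 ^ 2 * (2 * c - a) by ring,
      exists_sq_mul_eq_sq_iff (by norm_num), exists_sq_mul_eq_sq_iff (by norm_num),
      exists_sq_mul_eq_sq_iff (by norm_num), or_iff_left hpos, or_comm]
  · rw [show (X ^ 4 - C (4 * a) * X ^ 2 + C (16 * c ^ 2) : ℚ[X]) =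
        X ^ 4 + C (-(4 * a)) * X ^ 2 + C ((4 * c) ^ 2) by
          rw [map_neg, show (4 * c) ^ 2 = 16 * c ^ 2 by ring]; ring,
      ← not_or, ← not_iff_not, not_not, not_irreducible_biquadratic_sq_iff two_ne_zero,
      show (-(4 * a)) ^ 2 - 4 * (4 * c) ^ 2 = 4 ^ 2 * (a ^ 2 - 4 * c ^ 2) by ring,
      show 2 * (4 * c) - -(4 * a) = 2 ^ 2 * (a + 2 * c) by ring,
      show -2 * (4 * c) - -(4 * a) = 2 ^ 2 * (a - 2 * c) by ring,
      exists_sq_mul_eq_sq_iff (by norm_num), exists_sq_mul_eq_sq_iff (by norm_num),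
      exists_sq_mul_eq_sq_iff (by norm_num), or_iff_right hdisc, or_comm]
end

section
/- Let a, c ∈ ℚ with c ≥ 0, set b = c², and suppose f(x) = x⁸ + a·x⁴ + b is irreducible over ℚ. Define R₁(x) = x⁴ + (2a + 12c)·x² + (a − 2c)², R₂(x) = x⁴ + (2a − 12c)·x² + (a + 2c)², and R₃(x) = x⁴ − 4a·x² + 16b. Then: (1) if 2b + ac = d² with d ∈ ℚ, d ≥ 0, then R₁(x²) = (x⁴ + a + 6c + 4d)·(x⁴ + a + 6c − 4d), and both quartic factors are irreducible over ℚ and distinct; (2a) if c = e² with e ∈ ℚ, e ≥ 0, then R₂(x²) = (x⁴ + 4e·x² + a + 2c)·(x⁴ − 4e·x² + a + 2c), and both quartic factors are irreducible over ℚ and distinct; (2b) if 2b − ac = d² with d ∈ ℚ, d ≥ 0, then R₂(x²) = (x⁴ + a − 6c + 4d)·(x⁴ + a − 6c − 4d), and both quartic factors are irreducible over ℚ and distinct; (3a) if a − 2c = e² with e ∈ ℚ, e ≥ 0, then R₃(x²) = (x⁴ + 2e·x² − 4c)·(x⁴ − 2e·x² − 4c), and both quartic factors are irreducible over ℚ and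 distinct; (3b) if a + 2c = e² with e ∈ ℚ, e ≥ 0, then R₃(x²) = (x⁴ + 2e·x² + 4c)·(x⁴ − 2e·x² + 4c), and both quartic factors are irreducible over ℚ and distinct. -/
/-!
Irreducibility of `x⁸ + a x⁴ + c²` forbids three factorizations into quartics:
`(x⁴ + v)(x⁴ + w)` with `v + w = a`, `v w = c²`; `(x⁴ + s x² + c)(x⁴ - s x² + c)` with
`s² = 2c - a`; and `A² - u² (x³ + e x)²` with `A = x⁴ + (t + 2e) x² + c`, where `c = e²`,
`a + 2c = t²`, `u² = 2t + 4e`. Only `c²` occurs, so the same holds with `c` replaced by `-c`;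
this turns cases (2b) and (3a) into cases (1) and (3b).

Each quartic factor of `Rᵢ(x²)` is a biquadratic `x⁴ + p x² + q`, which is irreducible unless
`p² - 4q` is a square or `2β - p` is a square for some `β` with `β² = q`. In every case either
square root yields one of the forbidden factorizations of the octic.
-/

open Polynomial

namespace Polynomial

variable {R : Type*} [CommRing R]

theorem Monic.eq_X_sq_add_C_mul_X_add_C_s5 {p : R[X]} (hm : p.Monic) (hnd : p.natDegree = 2) :
    p = X ^ 2 + C (p.coeff 1) * X + C (p.coeff 0) := by
  have h2 : p.coeff 2 = 1 := hnd ▸ hm.coeff_natDegree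
  conv_lhs => rw [p.as_sum_range_C_mul_X_pow' (n := 3) (by omega)]
  simp only [Finset.sum_range_succ, Finset.sum_range_zero, h2, C_1]
  ring

theorem not_irreducible_of_eq_mul [IsDomain R] {f g h : R[X]} (hf : f = g * h)
    (hg : 0 < g.natDegree) (hh : 0 < h.natDegree) : ¬ Irreducible f := fun hirr =>
  (hirr.isUnit_or_isUnit hf).elim (fun hu => hg.ne' (natDegree_eq_zero_of_isUnit hu))
    (fun hu => hh.ne' (natDegree_eq_zero_of_isUnit hu))

end Polynomial

section Biquadratic

variable {K : Type*} [Field K]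

theorem exists_sq_of_quadratic_mul_quadratic_eq {α β α' β' p q : K}
    (h : (X ^ 2 + C α * X + C β) * (X ^ 2 + C α' * X + C β') = X ^ 4 + C p * X ^ 2 + C q) :
    (∃ s, s ^ 2 = p ^ 2 - 4 * q) ∨ ∃ γ s, γ ^ 2 = q ∧ s ^ 2 = 2 * γ - p := by
  have hexpand : (X ^ 2 + C α * X + C β) * (X ^ 2 + C α' * X + C β') =
      X ^ 4 + C (α + α') * X ^ 3 + C (β + β' + α * α') * X ^ 2 +
        C (α * β' + α' * β) * X + C (β * β') := by
    simp only [C_add, C_mul]; ring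
  rw [hexpand] at h
  have hcoeff (n : ℕ) := congrArg (coeff · n) h
  simp only [coeff_add, coeff_C_mul, coeff_X_pow, coeff_X, coeff_C] at hcoeff
  have h3 : α + α' = 0 := by simpa using hcoeff 3
  have h2 : β + β' + α * α' = p := by simpa using hcoeff 2
  have h1 : α * β' + α' * β = 0 := by simpa using hcoeff 1
  have h0 : β * β' = q := by simpa using hcoeff 0
  have hα' : α' = -α := by linear_combination h3
  have hsplit : α * (β' - β) = 0 := by linear_combination h1 - β * hα'
  rcases mul_eq_zero.mp hsplit with hα | hβ
  · exact .inl ⟨β - β',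
      by linear_combination (β + β' + p) * h2 - α' * (β + β' + p) * hα - 4 * h0⟩
  · exact .inr ⟨β, α, by linear_combination h0 - β * hβ,
      by linear_combination -h2 + α * hα' + hβ⟩

theorem irreducible_X_pow_four_add_C_mul_X_sq_add_C {p q : K}
    (hdisc : ∀ s, s ^ 2 ≠ p ^ 2 - 4 * q) (hsq : ∀ β s, β ^ 2 = q → s ^ 2 ≠ 2 * β - p) :
    Irreducible (X ^ 4 + C p * X ^ 2 + C q : K[X]) := by
  have hmonic : (X ^ 4 + C p * X ^ 2 + C q : K[X]).Monic := by monicity!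
  have hdeg : (X ^ 4 + C p * X ^ 2 + C q : K[X]).natDegree = 4 := by compute_degree!
  rw [hmonic.irreducible_iff_natDegree', hdeg]
  refine ⟨fun h => by simp [h] at hdeg, ?_⟩
  intro f g hf hg hfg hmem
  have hfdeg : f.natDegree + g.natDegree = 4 := by rw [← hf.natDegree_mul hg, hfg, hdeg]
  obtain hg1 | hg2 : g.natDegree = 1 ∨ g.natDegree = 2 := by
    have := Finset.mem_Ioc.mp hmem; omega
  · rw [hg.eq_X_add_C hg1] at hfg
    have hroot := congrArg (eval (-g.coeff 0)) hfg
    simp only [eval_mul, eval_add, eval_X, eval_C, eval_pow, neg_add_cancel, mul_zero] at hroot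
    exact hdisc (2 * g.coeff 0 ^ 2 + p) (by linear_combination (-4) * hroot)
  · rw [hf.eq_X_sq_add_C_mul_X_add_C_s5 (by omega), hg.eq_X_sq_add_C_mul_X_add_C_s5 hg2] at hfg
    obtain ⟨s, hs⟩ | ⟨γ, s, hγ, hs⟩ := exists_sq_of_quadratic_mul_quadratic_eq hfg
    · exact hdisc s hs
    · exact hsq γ s hγ hs

theorem X_pow_four_add_C_mul_X_sq_add_C_ne [CharZero K] {p q : K} (hp : p ≠ 0) :
    (X ^ 4 + C p * X ^ 2 + C q : K[X]) ≠ X ^ 4 - C p * X ^ 2 + C q := by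
  intro h
  have h2 := congrArg (coeff · 2) h
  simp only [coeff_add, coeff_sub, coeff_X_pow, coeff_C_mul, coeff_C_succ, Nat.reduceEqDiff,
    ↓reduceIte, mul_one, zero_add, add_zero, zero_sub] at h2
  exact hp (self_eq_neg.mp h2)

end Biquadratic

section Octic

variable {K : Type*} [Field K] {a c : K}

theorem not_irreducible_octic_of_add_eq_of_mul_eq {v w : K} (hadd : v + w = a)
    (hmul : v * w = c ^ 2) : ¬ Irreducible (X ^ 8 + C a * X ^ 4 + C (c ^ 2) : K[X]) := by
  refine not_irreducible_of_eq_mul (g := X ^ 4 + C v) (h := X ^ 4 + C w) ?_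
    (four_pos.trans_eq (by compute_degree! : _ = 4).symm)
    (four_pos.trans_eq (by compute_degree! : _ = 4).symm)
  rw [← hadd, ← hmul, C_add, C_mul]; ring

theorem not_irreducible_octic_of_sq_eq [CharZero K] {u : K} (hu : u ^ 2 = a ^ 2 - 4 * c ^ 2) :
    ¬ Irreducible (X ^ 8 + C a * X ^ 4 + C (c ^ 2) : K[X]) :=
  not_irreducible_octic_of_add_eq_of_mul_eq (v := (a - u) / 2) (w := (a + u) / 2)
    (by field_simp; ring) (by field_simp; linear_combination -hu)

theorem not_irreducible_octic_of_sq_eq_two_mul_sub {s : K} (hs : s ^ 2 = 2 * c - a) :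
    ¬ Irreducible (X ^ 8 + C a * X ^ 4 + C (c ^ 2) : K[X]) := by
  refine not_irreducible_of_eq_mul (g := X ^ 4 + C s * X ^ 2 + C c)
    (h := X ^ 4 - C s * X ^ 2 + C c) ?_
    (four_pos.trans_eq (by compute_degree! : _ = 4).symm)
    (four_pos.trans_eq (by compute_degree! : _ = 4).symm)
  rw [show a = 2 * c - s ^ 2 by rw [hs]; ring]
  simp only [map_sub, map_mul, map_pow, map_ofNat]; ring

theorem not_irreducible_octic_of_eq_sq_of_add_eq_sq {e t u : K} (he : c = e ^ 2)
    (ht : a + 2 * c = t ^ 2) (hu : u ^ 2 = 2 * t + 4 * e) :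
    ¬ Irreducible (X ^ 8 + C a * X ^ 4 + C (c ^ 2) : K[X]) := by
  refine not_irreducible_of_eq_mul
    (g := X ^ 4 + C u * X ^ 3 + C (t + 2 * e) * X ^ 2 + C (u * e) * X + C c)
    (h := X ^ 4 - C u * X ^ 3 + C (t + 2 * e) * X ^ 2 - C (u * e) * X + C c) ?_
    (four_pos.trans_eq (by compute_degree! : _ = 4).symm)
    (four_pos.trans_eq (by compute_degree! : _ = 4).symm)
  have hu' := congrArg C hu
  rw [show a = t ^ 2 - 2 * e ^ 2 by linear_combination ht - 2 * he, he]
  simp only [map_sub, map_add, map_mul, map_pow, map_ofNat] at hu' ⊢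
  linear_combination (X ^ 3 + C e * X : K[X]) ^ 2 * hu'

theorem ne_zero_of_irreducible_octic (hf : Irreducible (X ^ 8 + C a * X ^ 4 + C (c ^ 2) : K[X])) :
    c ≠ 0 := by
  rintro rfl
  exact not_irreducible_octic_of_add_eq_of_mul_eq (add_zero a) (by ring) hf

theorem sq_ne_four_mul_sq_of_irreducible_octic
    (hf : Irreducible (X ^ 8 + C a * X ^ 4 + C (c ^ 2) : K[X])) : a ^ 2 ≠ 4 * c ^ 2 := by
  intro h
  obtain h | h : a - 2 * c = 0 ∨ a + 2 * c = 0 := mul_eq_zero.mp (by linear_combination h)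
  · exact not_irreducible_octic_of_add_eq_of_mul_eq (v := c) (w := c) (by linear_combination -h)
      (by ring) hf
  · exact not_irreducible_octic_of_add_eq_of_mul_eq (v := -c) (w := -c)
      (by linear_combination -h) (by ring) hf

theorem mul_add_two_mul_ne_zero_of_irreducible_octic
    (hf : Irreducible (X ^ 8 + C a * X ^ 4 + C (c ^ 2) : K[X])) {d : K}
    (hd : c * (a + 2 * c) = d ^ 2) : d * (d + 2 * c) ≠ 0 := by
  intro h
  apply sq_ne_four_mul_sq_of_irreducible_octic hf
  apply mul_left_cancel₀ (ne_zero_of_irreducible_octic hf)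
  rcases mul_eq_zero.mp h with rfl | h
  · linear_combination (a - 2 * c) * hd
  · linear_combination (a + 2 * c) * hd + (a + 2 * c) * (d - 2 * c) * h

theorem irreducible_X_pow_four_add_C_of_mul_eq_sq [CharZero K]
    (hf : Irreducible (X ^ 8 + C a * X ^ 4 + C (c ^ 2) : K[X])) {d k : K}
    (hd : c * (a + 2 * c) = d ^ 2) (hk : c * k = (d + 2 * c) ^ 2) :
    Irreducible (X ^ 4 + C k : K[X]) := by
  have hc := ne_zero_of_irreducible_octic hf
  have hm : d + 2 * c ≠ 0 :=
    right_ne_zero_of_mul (mul_add_two_mul_ne_zero_of_irreducible_octic hf hd)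
  -- As `c * k = (d + 2c)²`, a square root of `-4k` makes `-c` a square, one of `k` makes `c` one.
  rw [show (X ^ 4 + C k : K[X]) = X ^ 4 + C 0 * X ^ 2 + C k by simp]
  refine irreducible_X_pow_four_add_C_mul_X_sq_add_C (fun s hs => ?_) (fun β s hβ hs => ?_)
  · have hs0 : s ≠ 0 := by
      rintro rfl
      exact hm (pow_eq_zero_iff two_ne_zero |>.mp (by linear_combination -hk + c / 4 * hs))
    set e := 2 * (d + 2 * c) / s
    have he0 : e ≠ 0 := div_ne_zero (mul_ne_zero two_ne_zero hm) hs0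
    have he : -c = e ^ 2 := by
      rw [div_pow, eq_div_iff (pow_ne_zero 2 hs0)]; linear_combination -c * hs + 4 * hk
    refine not_irreducible_octic_of_sq_eq_two_mul_sub (c := -c) (s := d / e) ?_ (by rwa [neg_sq])
    rw [div_pow, div_eq_iff (pow_ne_zero 2 he0), ← he]
    linear_combination -hd
  · have hβ0 : β ≠ 0 := by
      rintro rfl
      exact hm (pow_eq_zero_iff two_ne_zero |>.mp (by linear_combination -hk - c * hβ))
    set e := (d + 2 * c) / β
    have hβe : β * e = d + 2 * c := mul_div_cancel₀ _ hβ0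
    have he : c = e ^ 2 := by
      rw [div_pow, eq_div_iff (pow_ne_zero 2 hβ0)]; linear_combination c * hβ + hk
    refine not_irreducible_octic_of_eq_sq_of_add_eq_sq he (t := β - 2 * e) (u := s) ?_
      (by linear_combination hs) hf
    exact mul_left_cancel₀ hc (by linear_combination hd - (β - 2 * e) ^ 2 * he -
      (d + e * β - 2 * e ^ 2) * (hβe + 2 * he))

theorem irreducible_X_pow_four_add_C_mul_X_sq_add_C_of_eq_sq [CharZero K]
    (hf : Irreducible (X ^ 8 + C a * X ^ 4 + C (c ^ 2) : K[X])) {e : K} (he : c = e ^ 2) :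
    Irreducible (X ^ 4 + C (4 * e) * X ^ 2 + C (a + 2 * c) : K[X]) :=
  irreducible_X_pow_four_add_C_mul_X_sq_add_C
    (fun s hs => not_irreducible_octic_of_sq_eq_two_mul_sub (s := s / 2)
      (by linear_combination hs / 4 - 4 * he) hf)
    (fun β s hβ hs => not_irreducible_octic_of_eq_sq_of_add_eq_sq (e := -e) (t := β) (u := s)
      (by rw [neg_sq, he]) hβ.symm (by linear_combination hs) hf)

theorem irreducible_X_pow_four_add_C_mul_X_sq_add_C_of_add_eq_sq [CharZero K]
    (hf : Irreducible (X ^ 8 + C a * X ^ 4 + C (c ^ 2) : K[X])) {e : K} (he : a + 2 * c = e ^ 2) :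
    Irreducible (X ^ 4 + C (2 * e) * X ^ 2 + C (4 * c) : K[X]) :=
  irreducible_X_pow_four_add_C_mul_X_sq_add_C
    (fun s hs => not_irreducible_octic_of_sq_eq (u := e * s / 2)
      (by linear_combination e ^ 2 / 4 * hs - (e ^ 2 + a - 2 * c) * he) hf)
    (fun β s hβ hs => not_irreducible_octic_of_eq_sq_of_add_eq_sq (e := β / 2) (t := -e) (u := s)
      (by linear_combination -hβ / 4) (by rw [neg_sq, he]) (by linear_combination hs) hf)

section Resolvents

variable [CharZero K]

theorem resolvent₁_factorization (hf : Irreducible (X ^ 8 + C a * X ^ 4 + C (c ^ 2) : K[X]))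
    {d : K} (hd : 2 * c ^ 2 + a * c = d ^ 2) :
    (X ^ 8 + C (2 * a + 12 * c) * X ^ 4 + C ((a - 2 * c) ^ 2) : K[X]) =
        (X ^ 4 + C (a + 6 * c + 4 * d)) * (X ^ 4 + C (a + 6 * c - 4 * d)) ∧
      Irreducible (X ^ 4 + C (a + 6 * c + 4 * d) : K[X]) ∧
      Irreducible (X ^ 4 + C (a + 6 * c - 4 * d) : K[X]) ∧
      (X ^ 4 + C (a + 6 * c + 4 * d) : K[X]) ≠ X ^ 4 + C (a + 6 * c - 4 * d) := by
  have hd' := congrArg C hd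
  have hcd : c * (a + 2 * c) = d ^ 2 := by linear_combination hd
  have hd0 := left_ne_zero_of_mul (mul_add_two_mul_ne_zero_of_irreducible_octic hf hcd)
  refine ⟨?_, irreducible_X_pow_four_add_C_of_mul_eq_sq hf hcd (by linear_combination hd),
    irreducible_X_pow_four_add_C_of_mul_eq_sq hf (d := -d) (by linear_combination hd)
      (by linear_combination hd), ?_⟩
  · simp only [map_add, map_sub, map_mul, map_pow, map_ofNat] at hd' ⊢
    linear_combination (-16 : K[X]) * hd'
  · rw [Ne, add_right_inj, C_inj]
    intro h
    exact hd0 (by linear_combination h / 8)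

theorem resolvent₂_factorization_of_eq_sq
    (hf : Irreducible (X ^ 8 + C a * X ^ 4 + C (c ^ 2) : K[X])) {e : K} (he : c = e ^ 2) :
    (X ^ 8 + C (2 * a - 12 * c) * X ^ 4 + C ((a + 2 * c) ^ 2) : K[X]) =
        (X ^ 4 + C (4 * e) * X ^ 2 + C (a + 2 * c)) *
          (X ^ 4 - C (4 * e) * X ^ 2 + C (a + 2 * c)) ∧
      Irreducible (X ^ 4 + C (4 * e) * X ^ 2 + C (a + 2 * c) : K[X]) ∧
      Irreducible (X ^ 4 - C (4 * e) * X ^ 2 + C (a + 2 * c) : K[X]) ∧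
      (X ^ 4 + C (4 * e) * X ^ 2 + C (a + 2 * c) : K[X]) ≠
        X ^ 4 - C (4 * e) * X ^ 2 + C (a + 2 * c) := by
  have he' := congrArg C he
  have he0 : e ≠ 0 := by
    rintro rfl
    exact ne_zero_of_irreducible_octic hf (by simpa using he)
  refine ⟨?_, irreducible_X_pow_four_add_C_mul_X_sq_add_C_of_eq_sq hf he, ?_,
    X_pow_four_add_C_mul_X_sq_add_C_ne (mul_ne_zero (by norm_num) he0)⟩
  · simp only [map_add, map_sub, map_mul, map_pow, map_ofNat] at he' ⊢
    linear_combination (-16 * X ^ 4 : K[X]) * he'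
  · simpa only [mul_neg, map_neg, neg_mul, ← sub_eq_add_neg] using
      irreducible_X_pow_four_add_C_mul_X_sq_add_C_of_eq_sq hf (e := -e) (by rw [neg_sq, he])

theorem resolvent₃_factorization_of_add_two_mul_eq_sq
    (hf : Irreducible (X ^ 8 + C a * X ^ 4 + C (c ^ 2) : K[X])) {e : K} (he : a + 2 * c = e ^ 2) :
    (X ^ 8 - C (4 * a) * X ^ 4 + C (16 * c ^ 2) : K[X]) =
        (X ^ 4 + C (2 * e) * X ^ 2 + C (4 * c)) *
          (X ^ 4 - C (2 * e) * X ^ 2 + C (4 * c)) ∧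
      Irreducible (X ^ 4 + C (2 * e) * X ^ 2 + C (4 * c) : K[X]) ∧
      Irreducible (X ^ 4 - C (2 * e) * X ^ 2 + C (4 * c) : K[X]) ∧
      (X ^ 4 + C (2 * e) * X ^ 2 + C (4 * c) : K[X]) ≠
        X ^ 4 - C (2 * e) * X ^ 2 + C (4 * c) := by
  have he' := congrArg C he
  have he0 : e ≠ 0 := by
    rintro rfl
    apply sq_ne_four_mul_sq_of_irreducible_octic hf
    linear_combination (a - 2 * c) * he
  refine ⟨?_, irreducible_X_pow_four_add_C_mul_X_sq_add_C_of_add_eq_sq hf he, ?_,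
    X_pow_four_add_C_mul_X_sq_add_C_ne (mul_ne_zero two_ne_zero he0)⟩
  · simp only [map_add, map_mul, map_pow, map_ofNat] at he' ⊢
    linear_combination (-4 * X ^ 4 : K[X]) * he'
  · simpa only [mul_neg, map_neg, neg_mul, ← sub_eq_add_neg] using
      irreducible_X_pow_four_add_C_mul_X_sq_add_C_of_add_eq_sq hf (e := -e) (by rw [neg_sq, he])

theorem resolvent₂_factorization_of_two_mul_sq_sub_mul_eq_sq
    (hf : Irreducible (X ^ 8 + C a * X ^ 4 + C (c ^ 2) : K[X])) {d : K}
    (hd : 2 * c ^ 2 - a * c = d ^ 2) :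
    (X ^ 8 + C (2 * a - 12 * c) * X ^ 4 + C ((a + 2 * c) ^ 2) : K[X]) =
        (X ^ 4 + C (a - 6 * c + 4 * d)) * (X ^ 4 + C (a - 6 * c - 4 * d)) ∧
      Irreducible (X ^ 4 + C (a - 6 * c + 4 * d) : K[X]) ∧
      Irreducible (X ^ 4 + C (a - 6 * c - 4 * d) : K[X]) ∧
      (X ^ 4 + C (a - 6 * c + 4 * d) : K[X]) ≠ X ^ 4 + C (a - 6 * c - 4 * d) := by
  simpa only [mul_neg, ← sub_eq_add_neg, sub_neg_eq_add] using
    resolvent₁_factorization (c := -c) (by rwa [neg_sq]) (d := d) (by linear_combination hd)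

theorem resolvent₃_factorization_of_sub_two_mul_eq_sq
    (hf : Irreducible (X ^ 8 + C a * X ^ 4 + C (c ^ 2) : K[X])) {e : K} (he : a - 2 * c = e ^ 2) :
    (X ^ 8 - C (4 * a) * X ^ 4 + C (16 * c ^ 2) : K[X]) =
        (X ^ 4 + C (2 * e) * X ^ 2 - C (4 * c)) *
          (X ^ 4 - C (2 * e) * X ^ 2 - C (4 * c)) ∧
      Irreducible (X ^ 4 + C (2 * e) * X ^ 2 - C (4 * c) : K[X]) ∧
      Irreducible (X ^ 4 - C (2 * e) * X ^ 2 - C (4 * c) : K[X]) ∧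
      (X ^ 4 + C (2 * e) * X ^ 2 - C (4 * c) : K[X]) ≠
        X ^ 4 - C (2 * e) * X ^ 2 - C (4 * c) := by
  simpa only [mul_neg, map_neg, neg_sq, ← sub_eq_add_neg] using
    resolvent₃_factorization_of_add_two_mul_eq_sq (c := -c) (by rwa [neg_sq]) (e := e)
      (by linear_combination he)

end Resolvents

end Octic

theorem stmt5_general (a c : ℚ)
    (hf : Irreducible (X ^ 8 + C a * X ^ 4 + C (c ^ 2) : ℚ[X])) :
    (∀ d : ℚ, 0 ≤ d → 2 * c ^ 2 + a * c = d ^ 2 →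
      (X ^ 8 + C (2 * a + 12 * c) * X ^ 4 + C ((a - 2 * c) ^ 2) : ℚ[X]) =
        (X ^ 4 + C (a + 6 * c + 4 * d)) * (X ^ 4 + C (a + 6 * c - 4 * d)) ∧
      Irreducible (X ^ 4 + C (a + 6 * c + 4 * d) : ℚ[X]) ∧
      Irreducible (X ^ 4 + C (a + 6 * c - 4 * d) : ℚ[X]) ∧
      (X ^ 4 + C (a + 6 * c + 4 * d) : ℚ[X]) ≠ X ^ 4 + C (a + 6 * c - 4 * d)) ∧
    (∀ e : ℚ, 0 ≤ e → c = e ^ 2 →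
      (X ^ 8 + C (2 * a - 12 * c) * X ^ 4 + C ((a + 2 * c) ^ 2) : ℚ[X]) =
        (X ^ 4 + C (4 * e) * X ^ 2 + C (a + 2 * c)) *
          (X ^ 4 - C (4 * e) * X ^ 2 + C (a + 2 * c)) ∧
      Irreducible (X ^ 4 + C (4 * e) * X ^ 2 + C (a + 2 * c) : ℚ[X]) ∧
      Irreducible (X ^ 4 - C (4 * e) * X ^ 2 + C (a + 2 * c) : ℚ[X]) ∧
      (X ^ 4 + C (4 * e) * X ^ 2 + C (a + 2 * c) : ℚ[X]) ≠
        X ^ 4 - C (4 * e) * X ^ 2 + C (a + 2 * c)) ∧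
    (∀ d : ℚ, 0 ≤ d → 2 * c ^ 2 - a * c = d ^ 2 →
      (X ^ 8 + C (2 * a - 12 * c) * X ^ 4 + C ((a + 2 * c) ^ 2) : ℚ[X]) =
        (X ^ 4 + C (a - 6 * c + 4 * d)) * (X ^ 4 + C (a - 6 * c - 4 * d)) ∧
      Irreducible (X ^ 4 + C (a - 6 * c + 4 * d) : ℚ[X]) ∧
      Irreducible (X ^ 4 + C (a - 6 * c - 4 * d) : ℚ[X]) ∧
      (X ^ 4 + C (a - 6 * c + 4 * d) : ℚ[X]) ≠ X ^ 4 + C (a - 6 * c - 4 * d)) ∧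
    (∀ e : ℚ, 0 ≤ e → a - 2 * c = e ^ 2 →
      (X ^ 8 - C (4 * a) * X ^ 4 + C (16 * c ^ 2) : ℚ[X]) =
        (X ^ 4 + C (2 * e) * X ^ 2 - C (4 * c)) *
          (X ^ 4 - C (2 * e) * X ^ 2 - C (4 * c)) ∧
      Irreducible (X ^ 4 + C (2 * e) * X ^ 2 - C (4 * c) : ℚ[X]) ∧
      Irreducible (X ^ 4 - C (2 * e) * X ^ 2 - C (4 * c) : ℚ[X]) ∧
      (X ^ 4 + C (2 * e) * X ^ 2 - C (4 * c) : ℚ[X]) ≠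
        X ^ 4 - C (2 * e) * X ^ 2 - C (4 * c)) ∧
    (∀ e : ℚ, 0 ≤ e → a + 2 * c = e ^ 2 →
      (X ^ 8 - C (4 * a) * X ^ 4 + C (16 * c ^ 2) : ℚ[X]) =
        (X ^ 4 + C (2 * e) * X ^ 2 + C (4 * c)) *
          (X ^ 4 - C (2 * e) * X ^ 2 + C (4 * c)) ∧
      Irreducible (X ^ 4 + C (2 * e) * X ^ 2 + C (4 * c) : ℚ[X]) ∧
      Irreducible (X ^ 4 - C (2 * e) * X ^ 2 + C (4 * c) : ℚ[X]) ∧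
      (X ^ 4 + C (2 * e) * X ^ 2 + C (4 * c) : ℚ[X]) ≠
        X ^ 4 - C (2 * e) * X ^ 2 + C (4 * c)) := by
  exact ⟨fun _ _ hd => resolvent₁_factorization hf hd,
    fun _ _ he => resolvent₂_factorization_of_eq_sq hf he,
    fun _ _ hd => resolvent₂_factorization_of_two_mul_sq_sub_mul_eq_sq hf hd,
    fun _ _ he => resolvent₃_factorization_of_sub_two_mul_eq_sq hf he,
    fun _ _ he => resolvent₃_factorization_of_add_two_mul_eq_sq hf he⟩

theorem stmt5 (a c : ℚ) (hc : 0 ≤ c)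
    (hf : Irreducible (X ^ 8 + C a * X ^ 4 + C (c ^ 2) : ℚ[X])) :
    (∀ d : ℚ, 0 ≤ d → 2 * c ^ 2 + a * c = d ^ 2 →
      (X ^ 8 + C (2 * a + 12 * c) * X ^ 4 + C ((a - 2 * c) ^ 2) : ℚ[X]) =
        (X ^ 4 + C (a + 6 * c + 4 * d)) * (X ^ 4 + C (a + 6 * c - 4 * d)) ∧
      Irreducible (X ^ 4 + C (a + 6 * c + 4 * d) : ℚ[X]) ∧
      Irreducible (X ^ 4 + C (a + 6 * c - 4 * d) : ℚ[X]) ∧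
      (X ^ 4 + C (a + 6 * c + 4 * d) : ℚ[X]) ≠ X ^ 4 + C (a + 6 * c - 4 * d)) ∧
    (∀ e : ℚ, 0 ≤ e → c = e ^ 2 →
      (X ^ 8 + C (2 * a - 12 * c) * X ^ 4 + C ((a + 2 * c) ^ 2) : ℚ[X]) =
        (X ^ 4 + C (4 * e) * X ^ 2 + C (a + 2 * c)) *
          (X ^ 4 - C (4 * e) * X ^ 2 + C (a + 2 * c)) ∧
      Irreducible (X ^ 4 + C (4 * e) * X ^ 2 + C (a + 2 * c) : ℚ[X]) ∧
      Irreducible (X ^ 4 - C (4 * e) * X ^ 2 + C (a + 2 * c) : ℚ[X]) ∧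
      (X ^ 4 + C (4 * e) * X ^ 2 + C (a + 2 * c) : ℚ[X]) ≠
        X ^ 4 - C (4 * e) * X ^ 2 + C (a + 2 * c)) ∧
    (∀ d : ℚ, 0 ≤ d → 2 * c ^ 2 - a * c = d ^ 2 →
      (X ^ 8 + C (2 * a - 12 * c) * X ^ 4 + C ((a + 2 * c) ^ 2) : ℚ[X]) =
        (X ^ 4 + C (a - 6 * c + 4 * d)) * (X ^ 4 + C (a - 6 * c - 4 * d)) ∧
      Irreducible (X ^ 4 + C (a - 6 * c + 4 * d) : ℚ[X]) ∧
      Irreducible (X ^ 4 + C (a - 6 * c - 4 * d) : ℚ[X]) ∧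
      (X ^ 4 + C (a - 6 * c + 4 * d) : ℚ[X]) ≠ X ^ 4 + C (a - 6 * c - 4 * d)) ∧
    (∀ e : ℚ, 0 ≤ e → a - 2 * c = e ^ 2 →
      (X ^ 8 - C (4 * a) * X ^ 4 + C (16 * c ^ 2) : ℚ[X]) =
        (X ^ 4 + C (2 * e) * X ^ 2 - C (4 * c)) *
          (X ^ 4 - C (2 * e) * X ^ 2 - C (4 * c)) ∧
      Irreducible (X ^ 4 + C (2 * e) * X ^ 2 - C (4 * c) : ℚ[X]) ∧
      Irreducible (X ^ 4 - C (2 * e) * X ^ 2 - C (4 * c) : ℚ[X]) ∧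
      (X ^ 4 + C (2 * e) * X ^ 2 - C (4 * c) : ℚ[X]) ≠
        X ^ 4 - C (2 * e) * X ^ 2 - C (4 * c)) ∧
    (∀ e : ℚ, 0 ≤ e → a + 2 * c = e ^ 2 →
      (X ^ 8 - C (4 * a) * X ^ 4 + C (16 * c ^ 2) : ℚ[X]) =
        (X ^ 4 + C (2 * e) * X ^ 2 + C (4 * c)) *
          (X ^ 4 - C (2 * e) * X ^ 2 + C (4 * c)) ∧
      Irreducible (X ^ 4 + C (2 * e) * X ^ 2 + C (4 * c) : ℚ[X]) ∧
      Irreducible (X ^ 4 - C (2 * e) * X ^ 2 + C (4 * c) : ℚ[X]) ∧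
      (X ^ 4 + C (2 * e) * X ^ 2 + C (4 * c) : ℚ[X]) ≠
        X ^ 4 - C (2 * e) * X ^ 2 + C (4 * c)) :=
  stmt5_general a c hf
end

section
/- Let a, b ∈ ℚ with b a square in ℚ, and suppose f(x) = x⁸ + a·x⁴ + b is irreducible over ℚ. Then the Galois group of f over ℚ is not isomorphic to the quaternion group of order 8. -/
/-!
Since `f` is a polynomial in `X ^ 4`, with a root `α ≠ 0` also `i * α` is a root, so the
splitting field `K` of `f` contains a square root `ι` of `-1`. Complex conjugation restricts to an
involution of `K` sending `ι` to `-ι`, whereas the square of any automorphism fixes `ι`. In `Q₈`,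
however, both elements of order dividing `2` (namely `±1`) are squares.
-/

open Polynomial ComplexConjugate

theorem QuaternionGroup.isSquare_of_mul_self_eq_one (x : QuaternionGroup 2) (hx : x * x = 1) :
    IsSquare x := by
  revert x
  decide

theorem AlgEquiv.apply_eq_self_of_isSquare {F K : Type*} [CommSemiring F] [CommRing K]
    [IsDomain K] [Algebra F K] {σ : K ≃ₐ[F] K} (hσ : IsSquare σ) {ι : K} (hι : ι ^ 2 = -1) :
    σ ι = ι := by
  obtain ⟨τ, rfl⟩ := hσ
  have hτ : τ ι = ι ∨ τ ι = -ι :=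
    sq_eq_sq_iff_eq_or_eq_neg.mp (by rw [← map_pow, hι, map_neg, map_one])
  rcases hτ with h | h <;> simp [AlgEquiv.mul_apply, h]

theorem Complex.conj_eq_neg_of_sq_eq_neg_one {w : ℂ} (hw : w ^ 2 = -1) : conj w = -w := by
  rcases sq_eq_sq_iff_eq_or_eq_neg.mp (hw.trans I_sq.symm) with rfl | rfl <;> simp

theorem Polynomial.Gal.exists_mul_self_eq_one_not_isSquare (f : ℚ[X]) {ι : f.SplittingField}
    (hι : ι ^ 2 = -1) : ∃ c : f.Gal, c * c = 1 ∧ ¬IsSquare c := by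
  have : Fact ((f.map (algebraMap ℚ ℂ)).Splits) := ⟨IsAlgClosed.splits _⟩
  have : Normal ℚ f.SplittingField := SplittingField.instNormal f
  let complexConj : ℂ ≃ₐ[ℚ] ℂ := Complex.conjAe.restrictScalars ℚ
  have hconj : Gal.restrict f ℂ complexConj ι = -ι := by
    apply (algebraMap f.SplittingField ℂ).injective
    rw [map_neg]
    exact (AlgEquiv.restrictNormal_commutes complexConj _ ι).trans
      (Complex.conj_eq_neg_of_sq_eq_neg_one (by rw [← map_pow, hι, map_neg, map_one]))
  refine ⟨Gal.restrict f ℂ complexConj, ?_, fun hsq => ?_⟩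
  · rw [← map_mul, ← map_one (Gal.restrict f ℂ)]
    congr 1
    ext z
    exact Complex.conj_conj z
  · have hι0 : ι ≠ 0 := by rintro rfl; simp at hι
    exact hι0 (CharZero.eq_neg_self_iff.mp
      ((AlgEquiv.apply_eq_self_of_isSquare hsq hι).symm.trans hconj))

theorem X_pow_eight_add_eq_mul {K : Type*} [CommRing K] {a b α : K}
    (h : α ^ 8 + a * α ^ 4 + b = 0) :
    (X ^ 8 + C a * X ^ 4 + C b : K[X]) =
      (X ^ 2 + C (α ^ 2)) * ((X ^ 2 - C (α ^ 2)) * (X ^ 4 + C (a + α ^ 4))) := by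
  have hb : C b = -(C a * C α ^ 4 + C α ^ 8) := by
    rw [eq_neg_iff_add_eq_zero, ← C_pow, ← C_pow, ← C_mul, ← C_add, ← C_add, ← C_0]
    congr 1
    linear_combination h
  simp only [map_add, map_pow]
  linear_combination hb

theorem exists_sq_eq_neg_one_of_splits {K : Type*} [Field K] {a b : K} (hb : b ≠ 0)
    (hs : (X ^ 8 + C a * X ^ 4 + C b : K[X]).Splits) : ∃ ι : K, ι ^ 2 = -1 := by
  have hmonic : (X ^ 8 + C a * X ^ 4 + C b : K[X]).Monic := by monicity!
  obtain ⟨α, hα⟩ := hs.exists_eval_eq_zero (by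
    rw [show (X ^ 8 + C a * X ^ 4 + C b : K[X]).degree = 8 by compute_degree!]; decide)
  simp only [eval_add, eval_mul, eval_pow, eval_X, eval_C] at hα
  have hα0 : α ≠ 0 := by rintro rfl; simp_all
  have hquadratic : (X ^ 2 + C (α ^ 2) : K[X]).Splits :=
    hs.of_dvd hmonic.ne_zero ⟨_, X_pow_eight_add_eq_mul hα⟩
  obtain ⟨γ, hγ⟩ := hquadratic.exists_eval_eq_zero (by rw [degree_X_pow_add_C two_pos]; decide)
  simp only [eval_add, eval_pow, eval_X, eval_C] at hγ
  exact ⟨γ / α, by field_simp; linear_combination hγ⟩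

theorem stmt7_general (a b : ℚ)
    (hf : Irreducible (X ^ 8 + C a * X ^ 4 + C b : ℚ[X])) :
    IsEmpty ((X ^ 8 + C a * X ^ 4 + C b : ℚ[X]).Gal ≃* QuaternionGroup 2) := by
  refine ⟨fun e => ?_⟩
  set f : ℚ[X] := X ^ 8 + C a * X ^ 4 + C b
  have hb : b ≠ 0 := by
    have hdeg : f.natDegree = 8 := by unfold f; compute_degree!
    simpa [f] using hf.not_isRoot_of_natDegree_ne_one (by rw [hdeg]; decide) (x := 0)
  have hsplits := SplittingField.splits f
  simp only [f, Polynomial.map_add, Polynomial.map_mul, Polynomial.map_pow, map_X, map_C]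
    at hsplits
  obtain ⟨ι, hι⟩ := exists_sq_eq_neg_one_of_splits (by simpa using hb) hsplits
  obtain ⟨c, hc, hc_not_sq⟩ := Gal.exists_mul_self_eq_one_not_isSquare f hι
  apply hc_not_sq
  simpa using (QuaternionGroup.isSquare_of_mul_self_eq_one (e c)
    (by rw [← map_mul, hc, map_one])).map e.symm

theorem stmt7 (a b : ℚ) (hb : ∃ r : ℚ, b = r ^ 2)
    (hf : Irreducible (X ^ 8 + C a * X ^ 4 + C b : ℚ[X])) :
    IsEmpty ((X ^ 8 + C a * X ^ 4 + C b : ℚ[X]).Gal ≃* QuaternionGroup 2) :=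
  stmt7_general a b hf
end

section
/- Let a, b ∈ ℚ with b a square in ℚ, and suppose f(x) = x⁸ + a·x⁴ + b is irreducible over ℚ. Then the order of the Galois group of f over ℚ divides 32. -/
/-!
Write b = r² and let θ be a root of f in its splitting field L; K = ℚ(θ) has degree 8. Over K,
f = (X⁴ - θ⁴)(X⁴ - (r/θ²)²), so since f splits in L there are i, μ ∈ L with i² = -1 and
μ² = r/θ² ∈ K. Every root η of f satisfies η⁴ = θ⁴ or η⁴ = μ⁴, hence η ∈ {±θ, ±iθ, ±μ, ±iμ}.
So L = K(i, μ) is obtained from K by adjoining two square roots, and [L : ℚ] divides 8 · 4.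
-/

open Polynomial IntermediateField Module

theorem finrank_adjoin_simple_dvd_two_of_sq_eq {F L : Type*} [Field F] [Field L] [Algebra F L]
    {x : L} {c : F} (h : x ^ 2 = algebraMap F L c) : finrank F F⟮x⟯ ∣ 2 := by
  have hroot : aeval x (X ^ 2 - C c) = 0 := by simp [h]
  have hint : IsIntegral F x := ⟨X ^ 2 - C c, monic_X_pow_sub_C c two_ne_zero, hroot⟩
  have hle : (minpoly F x).natDegree ≤ 2 := by
    simpa using natDegree_le_of_dvd (minpoly.dvd F x hroot) (X_pow_sub_C_ne_zero two_pos c)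
  have hpos := minpoly.natDegree_pos hint
  rw [adjoin.finrank hint]
  interval_cases (minpoly F x).natDegree <;> norm_num

theorem finrank_dvd_four_of_adjoin_sq_eq {F L : Type*} [Field F] [Field L] [Algebra F L]
    {x y : L} {c d : F} (hx : x ^ 2 = algebraMap F L c) (hy : y ^ 2 = algebraMap F L d)
    (htop : F⟮x, y⟯ = ⊤) : finrank F L ∣ 4 := by
  let K := F⟮x⟯
  have hyK : y ^ 2 = algebraMap K L (algebraMap F K d) := by
    rwa [← IsScalarTower.algebraMap_apply]
  have hKtop : K⟮y⟯ = ⊤ := by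
    apply restrictScalars_injective F
    rw [adjoin_adjoin_left, restrictScalars_top, Set.singleton_union, htop]
  rw [← finrank_mul_finrank F K L, ← finrank_top' (F := K) (E := L), ← hKtop]
  exact Nat.mul_dvd_mul (finrank_adjoin_simple_dvd_two_of_sq_eq hx)
    (finrank_adjoin_simple_dvd_two_of_sq_eq hyK)

theorem mem_of_pow_four_eq {L S : Type*} [Field L] [SetLike S L] [SubringClass S L] {s : S}
    {i x y : L} (hi : i ^ 2 = -1) (his : i ∈ s) (hxs : x ∈ s) (h : y ^ 4 = x ^ 4) : y ∈ s := by
  have hix : i * x ∈ s := mul_mem his hxs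
  have hfac : (y - x) * (y + x) * ((y - i * x) * (y + i * x)) = 0 := by
    linear_combination h - (y ^ 2 - x ^ 2) * x ^ 2 * hi
  rcases mul_eq_zero.1 hfac with h | h <;> rcases mul_eq_zero.1 h with h | h
  · rwa [sub_eq_zero.1 h]
  · rw [eq_neg_of_add_eq_zero_left h]; exact neg_mem hxs
  · rwa [sub_eq_zero.1 h]
  · rw [eq_neg_of_add_eq_zero_left h]; exact neg_mem hix

theorem IntermediateField.eq_top_of_subset_of_adjoin_eq_top {F K L : Type*} [Field F] [Field K]
    [Field L] [Algebra F K] [Algebra K L] [Algebra F L] [IsScalarTower F K L] {S : Set L}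
    (hS : Algebra.adjoin F S = ⊤) {E : IntermediateField K L} (h : S ⊆ E) : E = ⊤ := by
  refine eq_top_iff.2 fun x _ => ?_
  have hle : Algebra.adjoin F S ≤ (E.restrictScalars F).toSubalgebra := Algebra.adjoin_le h
  exact hle (hS ▸ Algebra.mem_top)

theorem X_sq_sub_C_dvd {R : Type*} [CommRing R] (c : R) : X ^ 2 - C c ∣ X ^ 4 - C (c ^ 2) := by
  have h := sub_dvd_pow_sub_pow (X ^ 2 : R[X]) (C c) 2
  rwa [← pow_mul, ← C_pow] at h

theorem exists_sq_eq_of_splits {L : Type*} [Field L] {p : L[X]} (hp : p.Splits) (hp0 : p ≠ 0)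
    {c : L} (h : X ^ 2 - C c ∣ p) : ∃ x, x ^ 2 = c := by
  obtain ⟨x, hx⟩ := (hp.of_dvd hp0 h).exists_eval_eq_zero (by simp [degree_X_pow_sub_C])
  exact ⟨x, by simpa [sub_eq_zero] using hx⟩

theorem X_pow_eight_add_C_mul_X_pow_four_add_C_sq {L : Type*} [Field L] {a r θ : L} (hθ0 : θ ≠ 0)
    (hθ : θ ^ 8 + a * θ ^ 4 + r ^ 2 = 0) :
    (X ^ 8 + C a * X ^ 4 + C (r ^ 2) : L[X]) =
      (X ^ 4 - C ((-θ ^ 2) ^ 2)) * (X ^ 4 - C ((r / θ ^ 2) ^ 2)) := by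
  have ha : a = -(-θ ^ 2) ^ 2 - (r / θ ^ 2) ^ 2 := by
    field_simp
    linear_combination hθ
  have hr : r ^ 2 = (-θ ^ 2) ^ 2 * (r / θ ^ 2) ^ 2 := by field_simp
  rw [hr, ha]
  simp only [map_sub, map_neg, map_mul]
  ring

theorem exists_sq_eq_of_splits_X_pow_eight {L : Type*} [Field L] {a r θ : L}
    (hs : (X ^ 8 + C a * X ^ 4 + C (r ^ 2)).Splits) (hθ0 : θ ≠ 0)
    (hθ : θ ^ 8 + a * θ ^ 4 + r ^ 2 = 0) : (∃ i : L, i ^ 2 = -1) ∧ ∃ μ : L, μ ^ 2 = r / θ ^ 2 := by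
  rw [X_pow_eight_add_C_mul_X_pow_four_add_C_sq hθ0 hθ] at hs
  have hs0 : (X ^ 4 - C ((-θ ^ 2) ^ 2)) * (X ^ 4 - C ((r / θ ^ 2) ^ 2)) ≠ 0 :=
    mul_ne_zero (X_pow_sub_C_ne_zero four_pos _) (X_pow_sub_C_ne_zero four_pos _)
  obtain ⟨ν, hν⟩ := exists_sq_eq_of_splits hs hs0 ((X_sq_sub_C_dvd _).mul_right _)
  refine ⟨⟨ν / θ, ?_⟩, exists_sq_eq_of_splits hs hs0 ((X_sq_sub_C_dvd _).mul_left _)⟩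
  rw [div_pow, hν, neg_div, div_self (pow_ne_zero 2 hθ0)]

theorem mem_of_root_X_pow_eight {L S : Type*} [Field L] [SetLike S L] [SubringClass S L] {s : S}
    {a r θ i μ η : L} (hθ0 : θ ≠ 0) (hθ : θ ^ 8 + a * θ ^ 4 + r ^ 2 = 0) (hi : i ^ 2 = -1)
    (hμ : μ ^ 2 = r / θ ^ 2) (hθs : θ ∈ s) (his : i ∈ s) (hμs : μ ∈ s)
    (hη : η ^ 8 + a * η ^ 4 + r ^ 2 = 0) : η ∈ s := by
  have h := congrArg (eval η) (X_pow_eight_add_C_mul_X_pow_four_add_C_sq hθ0 hθ)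
  simp only [eval_add, eval_mul, eval_sub, eval_pow, eval_X, eval_C, hη, zero_eq_mul,
    sub_eq_zero] at h
  rcases h with h | h
  · exact mem_of_pow_four_eq hi his hθs (by rw [h]; ring)
  · exact mem_of_pow_four_eq hi his hμs (by rw [h, ← hμ]; ring)

theorem finrank_dvd_finrank_mul_four {F L : Type*} [Field F] [Field L] [Algebra F L] {S : Set L}
    (hS : Algebra.adjoin F S = ⊤) (K : IntermediateField F L) {x y : L} {c d : K}
    (hx : x ^ 2 = algebraMap K L c) (hy : y ^ 2 = algebraMap K L d) (h : S ⊆ K⟮x, y⟯) :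
    finrank F L ∣ finrank F K * 4 := by
  rw [← finrank_mul_finrank F K L]
  exact Nat.mul_dvd_mul_left _
    (finrank_dvd_four_of_adjoin_sq_eq hx hy (eq_top_of_subset_of_adjoin_eq_top hS h))

theorem stmt8 (a b : ℚ) (hb : ∃ r : ℚ, b = r ^ 2)
    (hf : Irreducible (X ^ 8 + C a * X ^ 4 + C b : ℚ[X])) :
    Nat.card (X ^ 8 + C a * X ^ 4 + C b : ℚ[X]).Gal ∣ 32 := by
  obtain ⟨r, rfl⟩ := hb
  set f : ℚ[X] := X ^ 8 + C a * X ^ 4 + C (r ^ 2)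
  set L := f.SplittingField
  have hdeg : f.natDegree = 8 := by simp only [f]; compute_degree!
  have hroot (η : L) : aeval η f = 0 ↔ η ^ 8 + a * η ^ 4 + r ^ 2 = 0 := by simp [f]
  have hsplit : (X ^ 8 + C (a : L) * X ^ 4 + C ((r : L) ^ 2)).Splits := by
    simpa [f] using SplittingField.splits f
  have hdegL : (X ^ 8 + C (a : L) * X ^ 4 + C ((r : L) ^ 2)).degree = 8 := by compute_degree!
  obtain ⟨θ, hθ⟩ := hsplit.exists_eval_eq_zero (by rw [hdegL]; decide)
  simp only [eval_add, eval_mul, eval_pow, eval_X, eval_C] at hθ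
  have hmin : minpoly ℚ θ = f :=
    (minpoly.eq_of_irreducible_of_monic hf ((hroot θ).2 hθ) (by simp only [f]; monicity!)).symm
  have hθ0 : θ ≠ 0 := by rintro rfl; simp [← hmin] at hdeg
  obtain ⟨⟨i, hi⟩, μ, hμ⟩ := exists_sq_eq_of_splits_X_pow_eight hsplit hθ0 hθ
  let K := ℚ⟮θ⟯
  have hμK : μ ^ 2 = algebraMap K L (r / AdjoinSimple.gen ℚ θ ^ 2) := by simp [hμ]
  rw [Gal.card_of_separable hf.separable, show 32 = finrank ℚ K * 4 by
    rw [adjoin.finrank (.of_finite ℚ θ), hmin, hdeg]]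
  -- Restated so that `L` carries the `ℚ`-algebra structure found by instance search
  -- (`DivisionRing.toRatAlgebra`) rather than the splitting field's own, which differs reducibly.
  have hgen : Algebra.adjoin ℚ (f.rootSet L) = ⊤ := SplittingField.adjoin_rootSet f
  refine finrank_dvd_finrank_mul_four hgen K (x := i) (c := -1)
    (by simp [hi]) hμK fun η hη => ?_
  refine mem_of_root_X_pow_eight hθ0 hθ hi hμ ?_ (subset_adjoin K _ (by simp))
    (subset_adjoin K _ (by simp)) ((hroot η).1 (mem_rootSet.1 hη).2)
  simpa using (K⟮i, μ⟯).algebraMap_mem (AdjoinSimple.gen ℚ θ)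
end

section
/- Let a, c ∈ ℚ with c ≥ 0 and c not a square in ℚ, set b = c², and suppose f(x) = x⁸ + a·x⁴ + b is irreducible over ℚ. Let K = ℚ(θ) be the field obtained by adjoining a root θ of f to ℚ. Then for each r ∈ {−1, c, −c}, the image of r in K is a square in K if and only if at least one of r·(a² − 4b), r·(−a + 2c), or r·(−a − 2c) is a square in ℚ. -/
/-!
Put `s = θ² + c/θ²` and `s' = θ² - c/θ²`. Then `s² = -a + 2c`, `s'² = -a - 2c` and
`2θ² = s + s'`, so `K = L(θ)` with `L = ℚ(s, s')`, and irreducibility of `f` means that neither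
`p = -a + 2c`, `q = -a - 2c` nor `pq = a² - 4c²` is a rational square. A square root of `r ∈ ℚ`
in `K` has the form `u + vθ` with `u, v ∈ L`, so either `r = u²` or `r = v²θ²`. In the first case
`r` is a square in the biquadratic field `ℚ(√p, √q)`, hence one of `r, rp, rq, rpq` is a rational
square. In the second case, comparing coefficients in `L = ℚ(s')(s)` shows that `q - p = -4c` is a
square in `ℚ(s')`, and symmetrically `p - q = 4c` is a square in `ℚ(s)`; descending to `ℚ`, both
`cp` and `-cq` are rational squares, which settles each `r ∈ {-1, c, -c}`. Conversely `s`, `s'`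
and `ss'` are explicit square roots of `p`, `q` and `pq` in `K`.
-/

open Polynomial

theorem ne_zero_of_not_isSquare {M : Type*} [MulZeroClass M] {x : M} (h : ¬IsSquare x) : x ≠ 0 := by
  rintro rfl
  exact h IsSquare.zero

theorem isSquare_of_isSquare_sq_mul {G : Type*} [CommGroupWithZero G] {a x : G} (ha : a ≠ 0)
    (h : IsSquare (a ^ 2 * x)) : IsSquare x := by
  simpa [ha] using h.div (IsSquare.sq a)

section QuadraticExtension

variable {k E : Type*} [Field k] [Field E] [Algebra k E]

theorem exists_eq_add_mul_of_mem_adjoin_insert {R A : Type*} [CommRing R] [CommRing A]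
    [Algebra R A] {F : Subalgebra R A} {t x : A} (ht : t ^ 2 ∈ F)
    (hx : x ∈ Algebra.adjoin R (insert t (F : Set A))) : ∃ u ∈ F, ∃ v ∈ F, x = u + v * t := by
  induction hx using Algebra.adjoin_induction with
  | mem x hx =>
    rcases hx with rfl | hx
    · exact ⟨0, F.zero_mem, 1, F.one_mem, by ring⟩
    · exact ⟨x, hx, 0, F.zero_mem, by ring⟩
  | algebraMap r => exact ⟨_, F.algebraMap_mem r, 0, F.zero_mem, by ring⟩
  | add x y _ _ hx hy =>
    obtain ⟨u, hu, v, hv, rfl⟩ := hx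
    obtain ⟨u', hu', v', hv', rfl⟩ := hy
    exact ⟨u + u', F.add_mem hu hu', v + v', F.add_mem hv hv', by ring⟩
  | mul x y _ _ hx hy =>
    obtain ⟨u, hu, v, hv, rfl⟩ := hx
    obtain ⟨u', hu', v', hv', rfl⟩ := hy
    refine ⟨u * u' + v * v' * t ^ 2, F.add_mem (F.mul_mem hu hu') (F.mul_mem (F.mul_mem hv hv') ht),
      u * v' + v * u', F.add_mem (F.mul_mem hu hv') (F.mul_mem hv hu'), by ring⟩

theorem notMem_bot_of_sq_eq {s : E} {q : k} (hs : s ^ 2 = algebraMap k E q) (hq : ¬IsSquare q) :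
    s ∉ (⊥ : Subalgebra k E) := by
  intro h
  obtain ⟨m, rfl⟩ := Algebra.mem_bot.1 h
  exact hq ⟨m, (algebraMap k E).injective (by rw [← hs, map_mul, sq])⟩

variable [Algebra.IsAlgebraic k E] {F : Subalgebra k E}

theorem eq_zero_of_mul_mem_of_notMem {t v : E} (hv : v ∈ F) (ht : t ∉ F) (h : v * t ∈ F) :
    v = 0 := by
  by_contra hv0
  refine ht ?_
  have := F.mul_mem (F.inv_mem_of_algebraic (x := ⟨v, hv⟩) (Algebra.IsAlgebraic.isAlgebraic v)) h
  rwa [inv_mul_cancel_left₀ hv0] at this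

theorem eq_zero_or_eq_zero_of_add_mul_sq_mem [NeZero (2 : E)] {t u v : E} (ht : t ∉ F)
    (ht2 : t ^ 2 ∈ F) (hu : u ∈ F) (hv : v ∈ F) (h : (u + v * t) ^ 2 ∈ F) : u = 0 ∨ v = 0 := by
  have h2uv : 2 * u * v * t ∈ F := by
    have := F.sub_mem h (F.add_mem (F.mul_mem hu hu) (F.mul_mem (F.mul_mem hv hv) ht2))
    convert this using 1; ring
  have := eq_zero_of_mul_mem_of_notMem (F.mul_mem (F.mul_mem (ofNat_mem F 2) hu) hv) ht h2uv
  simpa [two_ne_zero] using this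

variable [NeZero (2 : E)]

theorem isSquare_or_isSquare_mul_of_mem_adjoin {s y : E} {q x : k}
    (hs : s ^ 2 = algebraMap k E q) (hq : ¬IsSquare q) (hy : y ∈ Algebra.adjoin k {s})
    (hyx : y ^ 2 = algebraMap k E x) : IsSquare x ∨ IsSquare (x * q) := by
  have hsF : s ^ 2 ∈ (⊥ : Subalgebra k E) := hs ▸ Subalgebra.algebraMap_mem _ q
  obtain ⟨u, hu, v, hv, rfl⟩ := exists_eq_add_mul_of_mem_adjoin_insert hsF
    (Algebra.adjoin_mono (Set.singleton_subset_iff.2 (Set.mem_insert _ _)) hy)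
  rcases eq_zero_or_eq_zero_of_add_mul_sq_mem (notMem_bot_of_sq_eq hs hq) hsF hu hv
    (hyx ▸ Subalgebra.algebraMap_mem _ x) with rfl | rfl
  · obtain ⟨n, rfl⟩ := Algebra.mem_bot.1 hv
    right
    refine ⟨n * q, (algebraMap k E).injective ?_⟩
    rw [map_mul, ← hyx, map_mul, map_mul, ← hs]
    ring
  · obtain ⟨m, rfl⟩ := Algebra.mem_bot.1 hu
    left
    refine ⟨m, (algebraMap k E).injective ?_⟩
    rw [← hyx, map_mul]
    ring

section Biquadratic

variable {s s' : E} {p q : k} (hs : s ^ 2 = algebraMap k E p) (hs' : s' ^ 2 = algebraMap k E q)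
  (hp : ¬IsSquare p) (hq : ¬IsSquare q) (hpq : ¬IsSquare (p * q))
include hs hs' hp hq hpq

theorem notMem_adjoin_of_sq_eq : s ∉ Algebra.adjoin k {s'} := fun h =>
  (isSquare_or_isSquare_mul_of_mem_adjoin hs' hq h hs).elim hp hpq

theorem isSquare_or_of_mem_adjoin_pair {y : E} {r : k} (hy : y ∈ Algebra.adjoin k {s, s'})
    (hyr : y ^ 2 = algebraMap k E r) :
    IsSquare r ∨ IsSquare (r * (p * q)) ∨ IsSquare (r * p) ∨ IsSquare (r * q) := by
  have hsF : s ^ 2 ∈ Algebra.adjoin k {s'} := hs ▸ Subalgebra.algebraMap_mem _ p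
  obtain ⟨u, hu, v, hv, rfl⟩ := exists_eq_add_mul_of_mem_adjoin_insert hsF
    (Algebra.adjoin_mono (Set.insert_subset_insert Algebra.subset_adjoin) hy)
  rcases eq_zero_or_eq_zero_of_add_mul_sq_mem (notMem_adjoin_of_sq_eq hs hs' hp hq hpq) hsF hu hv
    (hyr ▸ Subalgebra.algebraMap_mem _ r) with rfl | rfl
  · have hv2 : v ^ 2 = algebraMap k E (r / p) := by
      rw [map_div₀, eq_div_iff (by simpa using ne_zero_of_not_isSquare hp), ← hs, ← hyr]
      ring
    rcases isSquare_or_isSquare_mul_of_mem_adjoin hs' hq hv hv2 with h | h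
    · right; right; left
      have := (IsSquare.sq p).mul h
      rwa [show p ^ 2 * (r / p) = r * p by field_simp] at this
    · right; left
      have := (IsSquare.sq p).mul h
      rwa [show p ^ 2 * (r / p * q) = r * (p * q) by field_simp] at this
  · rcases isSquare_or_isSquare_mul_of_mem_adjoin hs' hq hu (by simpa using hyr) with h | h
    · exact Or.inl h
    · exact Or.inr (Or.inr (Or.inr h))

theorem isSquare_sub_or_of_sq_mul_add_eq {w : E} {ρ : k} (hρ : ρ ≠ 0)
    (hw : w ∈ Algebra.adjoin k {s, s'}) (hwρ : w ^ 2 * (s + s') = algebraMap k E ρ) :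
    IsSquare (q - p) ∨ IsSquare ((q - p) * q) := by
  set F := Algebra.adjoin k {s'}
  have hsF : s ^ 2 ∈ F := hs ▸ Subalgebra.algebraMap_mem _ p
  have hs'F : s' ∈ F := Algebra.self_mem_adjoin_singleton k s'
  obtain ⟨A, hA, B, hB, rfl⟩ := exists_eq_add_mul_of_mem_adjoin_insert hsF
    (Algebra.adjoin_mono (Set.insert_subset_insert Algebra.subset_adjoin) hw)
  set P := algebraMap k E p
  set Q := algebraMap k E q
  have hPF : P ∈ F := Subalgebra.algebraMap_mem _ p
  have hA2B2F : A ^ 2 + B ^ 2 * P ∈ F := F.add_mem (F.pow_mem hA 2) (F.mul_mem (F.pow_mem hB 2) hPF)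
  have hABF : 2 * A * B ∈ F := F.mul_mem (F.mul_mem (ofNat_mem F 2) hA) hB
  -- `w² (s + s') - ρ = X s + Y` with `X, Y ∈ F`; as `s ∉ F`, both coefficients vanish.
  have hexp : (A ^ 2 + B ^ 2 * P + 2 * A * B * s') * s
      + ((A ^ 2 + B ^ 2 * P) * s' + 2 * A * B * P - algebraMap k E ρ) = 0 := by
    linear_combination hwρ - (B ^ 2 * (s + s') + 2 * A * B) * hs
  have hX : A ^ 2 + B ^ 2 * P + 2 * A * B * s' = 0 := by
    refine eq_zero_of_mul_mem_of_notMem (F.add_mem hA2B2F (F.mul_mem hABF hs'F))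
      (notMem_adjoin_of_sq_eq hs hs' hp hq hpq) ?_
    rw [eq_neg_of_add_eq_zero_left hexp]
    exact F.neg_mem (F.sub_mem (F.add_mem (F.mul_mem hA2B2F hs'F) (F.mul_mem hABF hPF))
      (Subalgebra.algebraMap_mem _ ρ))
  have hρAB : algebraMap k E ρ = 2 * A * B * (P - Q) := by
    linear_combination -hexp + (s + s') * hX - 2 * A * B * hs'
  -- `(A² - B²p)² = (A² + B²p)² - (2AB)²p = (2AB)²(q - p)` and `2AB(p - q) = ρ`
  have hsq : (algebraMap k E (p - q) * (A ^ 2 - B ^ 2 * P)) ^ 2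
      = algebraMap k E (ρ ^ 2 * (q - p)) := by
    rw [map_mul, map_pow, map_sub, map_sub, hρAB]
    linear_combination (P - Q) ^ 2 * (A ^ 2 + B ^ 2 * P - 2 * A * B * s') * hX
      + (P - Q) ^ 2 * (2 * A * B) ^ 2 * hs'
  have hyF : algebraMap k E (p - q) * (A ^ 2 - B ^ 2 * P) ∈ F :=
    F.mul_mem (Subalgebra.algebraMap_mem _ _)
      (F.sub_mem (F.pow_mem hA 2) (F.mul_mem (F.pow_mem hB 2) hPF))
  exact (isSquare_or_isSquare_mul_of_mem_adjoin hs' hq hyF hsq).imp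
    (isSquare_of_isSquare_sq_mul hρ)
    (fun h => isSquare_of_isSquare_sq_mul hρ (by rwa [mul_assoc] at h))

end Biquadratic

theorem exists_mem_sq_eq_or_sq_mul_sq_eq {F : Subalgebra k E} {t y : E} (ht : t ^ 2 ∈ F)
    (hy : y ∈ Algebra.adjoin k (insert t (F : Set E))) (hyF : y ^ 2 ∈ F) :
    ∃ u ∈ F, y ^ 2 = u ^ 2 ∨ y ^ 2 = u ^ 2 * t ^ 2 := by
  obtain ⟨u, hu, v, hv, rfl⟩ := exists_eq_add_mul_of_mem_adjoin_insert ht hy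
  by_cases htF : t ∈ F
  · exact ⟨u + v * t, F.add_mem hu (F.mul_mem hv htF), Or.inl rfl⟩
  rcases eq_zero_or_eq_zero_of_add_mul_sq_mem htF ht hu hv hyF with rfl | rfl
  · exact ⟨v, hv, Or.inr (by ring)⟩
  · exact ⟨u, hu, Or.inl (by ring)⟩

end QuadraticExtension

theorem isSquare_algebraMap_of_isSquare_mul {k E : Type*} [Field k] [Field E] [Algebra k E]
    {r d : k} {t : E} (hd : d ≠ 0) (ht : t ^ 2 = algebraMap k E d) (h : IsSquare (r * d)) :
    IsSquare (algebraMap k E r) := by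
  have := (h.map (algebraMap k E)).div (ht ▸ IsSquare.sq t)
  rwa [map_mul, mul_div_cancel_right₀ _ (by simpa using hd)] at this

theorem not_isSquare_of_eq_neg_one_or {k : Type*} [Field k] [LinearOrder k]
    [IsStrictOrderedRing k] {c r : k} (hc : 0 ≤ c) (hcsq : ¬IsSquare c)
    (hr : r = -1 ∨ r = c ∨ r = -c) : ¬IsSquare r := by
  rcases hr with rfl | rfl | rfl
  · exact fun h => by linarith [h.nonneg]
  · exact hcsq
  · exact fun h => hcsq (le_antisymm (neg_nonneg.1 h.nonneg) hc ▸ IsSquare.zero)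

theorem isSquare_mul_of_isSquare_sub_or {k : Type*} [Field k] [LinearOrder k]
    [IsStrictOrderedRing k] {p q c r : k} (hc : 0 ≤ c) (hcsq : ¬IsSquare c)
    (hsub : p - q = 2 ^ 2 * c) (hr : r = -1 ∨ r = c ∨ r = -c)
    (h₁ : IsSquare (q - p) ∨ IsSquare ((q - p) * q))
    (h₂ : IsSquare (p - q) ∨ IsSquare ((p - q) * p)) :
    IsSquare (r * (p * q)) ∨ IsSquare (r * p) ∨ IsSquare (r * q) := by
  have hc0 := ne_zero_of_not_isSquare hcsq
  have hqp : q - p = 2 ^ 2 * -c := by linear_combination -hsub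
  have hcp : IsSquare (c * p) := by
    refine isSquare_of_isSquare_sq_mul two_ne_zero ?_
    rw [← mul_assoc, ← hsub]
    exact h₂.resolve_left fun h => hcsq (isSquare_of_isSquare_sq_mul two_ne_zero (hsub ▸ h))
  have hcq : IsSquare (-c * q) := by
    refine isSquare_of_isSquare_sq_mul two_ne_zero ?_
    rw [← mul_assoc, ← hqp]
    refine h₁.resolve_left fun h => hc0 ?_
    exact le_antisymm (neg_nonneg.1 (isSquare_of_isSquare_sq_mul two_ne_zero (hqp ▸ h)).nonneg) hc
  rcases hr with rfl | rfl | rfl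
  · left
    have := (hcp.mul hcq).div (IsSquare.sq c)
    rwa [show c * p * (-c * q) / c ^ 2 = -1 * (p * q) by field_simp] at this
  · exact Or.inr (Or.inl hcp)
  · exact Or.inr (Or.inr hcq)

theorem isSquare_mul_of_isSquare_algebraMap {k E : Type*} [Field k] [LinearOrder k]
    [IsStrictOrderedRing k] [Field E] [Algebra k E] [Algebra.IsAlgebraic k E] [NeZero (2 : E)]
    {θ s s' : E} {p q c r : k} (hc : 0 ≤ c) (hcsq : ¬IsSquare c) (hsub : p - q = 2 ^ 2 * c)
    (hr : r = -1 ∨ r = c ∨ r = -c) (hs : s ^ 2 = algebraMap k E p)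
    (hs' : s' ^ 2 = algebraMap k E q) (hp : ¬IsSquare p) (hq : ¬IsSquare q)
    (hpq : ¬IsSquare (p * q)) (hθ : 2 * θ ^ 2 = s + s') (hgen : Algebra.adjoin k {θ} = ⊤)
    (h : IsSquare (algebraMap k E r)) :
    IsSquare (r * (p * q)) ∨ IsSquare (r * p) ∨ IsSquare (r * q) := by
  have hrns := not_isSquare_of_eq_neg_one_or hc hcsq hr
  obtain ⟨y, hy⟩ := (isSquare_iff_exists_sq _).1 h
  set L := Algebra.adjoin k {s, s'}
  have hθL : θ ^ 2 ∈ L := by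
    rw [show θ ^ 2 = algebraMap k E 2⁻¹ * (s + s') by rw [← hθ, map_inv₀, map_ofNat]; field_simp]
    exact L.mul_mem (L.algebraMap_mem _)
      (L.add_mem (Algebra.subset_adjoin (by simp)) (Algebra.subset_adjoin (by simp)))
  have hyθ : y ∈ Algebra.adjoin k (insert θ (L : Set E)) :=
    Algebra.adjoin_mono (Set.singleton_subset_iff.2 (Set.mem_insert _ _)) (hgen ▸ Algebra.mem_top)
  obtain ⟨u, hu, hyu | hyu⟩ := exists_mem_sq_eq_or_sq_mul_sq_eq hθL hyθ (hy ▸ L.algebraMap_mem r)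
  · exact (isSquare_or_of_mem_adjoin_pair hs hs' hp hq hpq hu
      (hyu.symm.trans hy.symm)).resolve_left hrns
  · have hr0 : 2 * r ≠ 0 := mul_ne_zero two_ne_zero (ne_zero_of_not_isSquare hrns)
    have hu2 : u ^ 2 * (s + s') = algebraMap k E (2 * r) := by
      rw [← hθ, map_mul, map_ofNat, hy, hyu]; ring
    exact isSquare_mul_of_isSquare_sub_or hc hcsq hsub hr
      (isSquare_sub_or_of_sq_mul_add_eq hs hs' hp hq hpq hr0 hu hu2)
      (isSquare_sub_or_of_sq_mul_add_eq hs' hs hq hp (by rwa [mul_comm]) hr0 (w := u)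
        (by rwa [Set.pair_comm]) (by rwa [add_comm s' s]))

section Octic

variable {k : Type*} [Field k]

theorem not_irreducible_of_eq_quartic_mul_quartic {f : k[X]} (α β γ δ : k)
    (hf : f = (X ^ 4 + C α * X ^ 2 + C β) * (X ^ 4 + C γ * X ^ 2 + C δ)) : ¬Irreducible f := by
  intro hirr
  rcases hirr.isUnit_or_isUnit hf with h | h
  all_goals
    have h0 := natDegree_eq_zero_of_isUnit h
    rw [show ∀ α β : k, (X ^ 4 + C α * X ^ 2 + C β : k[X]).natDegree = 4 by
      intro α β; compute_degree!] at h0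
    exact absurd h0 (by norm_num)

theorem not_isSquare_of_irreducible [NeZero (2 : k)] {a c : k}
    (hf : Irreducible (X ^ 8 + C a * X ^ 4 + C (c ^ 2) : k[X])) :
    ¬IsSquare (-a + 2 * c) ∧ ¬IsSquare (-a - 2 * c) ∧ ¬IsSquare ((-a + 2 * c) * (-a - 2 * c)) := by
  refine ⟨fun ⟨u, hu⟩ => ?_, fun ⟨u, hu⟩ => ?_, fun ⟨u, hu⟩ => ?_⟩
  · refine not_irreducible_of_eq_quartic_mul_quartic (-u) c u c ?_ hf
    rw [show a = 2 * c - u * u by linear_combination -hu]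
    simp only [map_sub, map_mul, map_neg, map_ofNat, map_pow]
    ring
  · refine not_irreducible_of_eq_quartic_mul_quartic (-u) (-c) u (-c) ?_ hf
    rw [show a = -2 * c - u * u by linear_combination -hu]
    simp only [map_sub, map_mul, map_neg, map_ofNat, map_pow]
    ring
  · refine not_irreducible_of_eq_quartic_mul_quartic 0 ((a - u) / 2) 0 ((a + u) / 2) ?_ hf
    have h2 : (2 : k) ≠ 0 := two_ne_zero
    have hc2 : (C (c ^ 2) : k[X]) = C ((a - u) / 2) * C ((a + u) / 2) := by
      rw [← C_mul]; congr 1; field_simp; linear_combination -hu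
    have ha : (C a : k[X]) = C ((a - u) / 2) + C ((a + u) / 2) := by
      rw [← C_add]; congr 1; field_simp; ring
    rw [hc2, ha, C_0]
    ring

end Octic

theorem exists_sq_eq_of_aeval_eq_zero {k E : Type*} [Field k] [Field E] [Algebra k E] {θ : E}
    {a c : k} (hc : c ≠ 0) (hθ : aeval θ (X ^ 8 + C a * X ^ 4 + C (c ^ 2)) = 0) :
    ∃ s s' : E, s ^ 2 = algebraMap k E (-a + 2 * c) ∧ s' ^ 2 = algebraMap k E (-a - 2 * c) ∧
      2 * θ ^ 2 = s + s' := by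
  simp only [map_add, map_mul, map_pow, aeval_X, aeval_C] at hθ
  have hθ0 : θ ≠ 0 := by
    rintro rfl
    exact hc (by simpa using hθ)
  refine ⟨θ ^ 2 + algebraMap k E c / θ ^ 2, θ ^ 2 - algebraMap k E c / θ ^ 2, ?_, ?_, by ring⟩
  all_goals
    simp only [map_add, map_sub, map_neg, map_mul, map_ofNat]
    field_simp
    linear_combination hθ

theorem stmt9 (a c : ℚ) (hc : 0 ≤ c) (hcsq : ¬ ∃ r : ℚ, c = r ^ 2)
    (hf : Irreducible (X ^ 8 + C a * X ^ 4 + C (c ^ 2) : ℚ[X])) :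
    ∀ r : ℚ, (r = -1 ∨ r = c ∨ r = -c) →
      ((∃ y : AdjoinRoot (X ^ 8 + C a * X ^ 4 + C (c ^ 2) : ℚ[X]),
          algebraMap ℚ (AdjoinRoot (X ^ 8 + C a * X ^ 4 + C (c ^ 2) : ℚ[X])) r = y ^ 2) ↔
        (∃ s : ℚ, r * (a ^ 2 - 4 * c ^ 2) = s ^ 2) ∨
        (∃ s : ℚ, r * (-a + 2 * c) = s ^ 2) ∨
        (∃ s : ℚ, r * (-a - 2 * c) = s ^ 2)) := by
  intro r hr
  simp only [← isSquare_iff_exists_sq] at hcsq ⊢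
  rw [show a ^ 2 - 4 * c ^ 2 = (-a + 2 * c) * (-a - 2 * c) by ring]
  have := Fact.mk hf
  -- As a field, `AdjoinRoot f` also carries `DivisionRing.toRatAlgebra`; keep the statement's
  -- `ℚ`-algebra structure instead.
  let _ : Algebra ℚ (AdjoinRoot (X ^ 8 + C a * X ^ 4 + C (c ^ 2) : ℚ[X])) :=
    AdjoinRoot.instAlgebra _
  obtain ⟨hp, hq, hpq⟩ := not_isSquare_of_irreducible hf
  have hroot : aeval (AdjoinRoot.root _) (X ^ 8 + C a * X ^ 4 + C (c ^ 2) : ℚ[X]) = 0 :=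
    (AdjoinRoot.aeval_eq _).trans AdjoinRoot.mk_self
  obtain ⟨s, s', hs, hs', hθ⟩ := exists_sq_eq_of_aeval_eq_zero (ne_zero_of_not_isSquare hcsq) hroot
  constructor
  · exact isSquare_mul_of_isSquare_algebraMap hc hcsq (by ring) hr hs hs' hp hq hpq hθ
      AdjoinRoot.adjoinRoot_eq_top
  · rintro (h | h | h)
    · exact isSquare_algebraMap_of_isSquare_mul (t := s * s') (ne_zero_of_not_isSquare hpq)
        (by rw [mul_pow, hs, hs', map_mul]) h
    · exact isSquare_algebraMap_of_isSquare_mul (ne_zero_of_not_isSquare hp) hs h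
    · exact isSquare_algebraMap_of_isSquare_mul (ne_zero_of_not_isSquare hq) hs' h
end

section
/- Let a, b ∈ ℚ and suppose g(x) = x⁴ + a·x³ + b·x² + a·x + 1 is irreducible over ℚ. Then Gal(g) is isomorphic to C₂ × C₂ if and only if there exist p, q, t ∈ ℚ such that a = p·q·t and b = (p² + q²)·t − 2. -/
/-!
The roots of `g` come in pairs `α, α⁻¹` and `β, β⁻¹` (irreducibility rules out the roots `±1`), so
`α + α⁻¹` and `β + β⁻¹` are the roots of `T² + aT + b - 2` and `e = (α - α⁻¹)(β - β⁻¹)` satisfies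
`e² = (b + 2)² - 4a²`. Every automorphism preserves the pairing, and within the dihedral group of
such permutations `e` is fixed exactly by the identity and the three fixed-point-free involutions.
If `Gal(g) ≅ C₂ × C₂`, then `ℚ(α)` is the whole splitting field, so no nontrivial element fixes a
root and every element fixes `e`. Conversely, if `e ∈ ℚ` then `β ∈ ℚ(α)`, so `|Gal(g)| = 4`, and
every element fixing `e` squares to `1`. Hence `Gal(g) ≅ C₂ × C₂` iff `(b + 2)² - 4a²` is a square,
and for `a = pqt`, `b = (p² + q²)t - 2` it is the square of `(p² - q²)t`.
-/

open Polynomial IntermediateField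

noncomputable def palindromicQuartic {R : Type*} [CommRing R] (a b : R) : R[X] :=
  X ^ 4 + C a * X ^ 3 + C b * X ^ 2 + C a * X + 1

section Ring

variable {R S : Type*} [CommRing R] [CommRing S] (a b : R)

@[simp]
theorem eval_palindromicQuartic (x : R) :
    (palindromicQuartic a b).eval x = x ^ 4 + a * x ^ 3 + b * x ^ 2 + a * x + 1 := by
  simp [palindromicQuartic]

@[simp]
theorem map_palindromicQuartic (f : R →+* S) :
    (palindromicQuartic a b).map f = palindromicQuartic (f a) (f b) := by
  simp [palindromicQuartic]

theorem monic_palindromicQuartic [Nontrivial R] : (palindromicQuartic a b).Monic := by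
  unfold palindromicQuartic; monicity!

theorem natDegree_palindromicQuartic [Nontrivial R] : (palindromicQuartic a b).natDegree = 4 := by
  unfold palindromicQuartic; compute_degree!

end Ring

section Field

variable {K : Type*} [Field K] {a b x y : K}

theorem ne_zero_of_isRoot_palindromicQuartic (hx : (palindromicQuartic a b).IsRoot x) : x ≠ 0 := by
  rintro rfl
  simp [IsRoot] at hx

theorem not_isRoot_of_irreducible_palindromicQuartic (hg : Irreducible (palindromicQuartic a b))
    (x : K) : ¬(palindromicQuartic a b).IsRoot x :=
  hg.not_isRoot_of_natDegree_ne_one (natDegree_palindromicQuartic a b ▸ by decide)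

theorem isRoot_palindromicQuartic_inv (hx : (palindromicQuartic a b).IsRoot x) :
    (palindromicQuartic a b).IsRoot x⁻¹ := by
  have hx0 := ne_zero_of_isRoot_palindromicQuartic hx
  simp only [IsRoot, eval_palindromicQuartic] at hx ⊢
  field_simp
  linear_combination hx

theorem inv_ne_self_of_isRoot_palindromicQuartic (hx : (palindromicQuartic a b).IsRoot x)
    (h1 : (palindromicQuartic a b).eval 1 ≠ 0) (h2 : (palindromicQuartic a b).eval (-1) ≠ 0) :
    x⁻¹ ≠ x := by
  intro h
  have hx0 := ne_zero_of_isRoot_palindromicQuartic hx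
  have : x * x = 1 := by rw [← inv_mul_cancel₀ hx0, h]
  rcases mul_self_eq_one_iff.1 this with rfl | rfl
  exacts [h1 hx, h2 hx]

theorem add_inv_sq_add_of_isRoot_palindromicQuartic (hx : (palindromicQuartic a b).IsRoot x) :
    (x + x⁻¹) ^ 2 + a * (x + x⁻¹) + (b - 2) = 0 := by
  have hx0 := ne_zero_of_isRoot_palindromicQuartic hx
  simp only [IsRoot, eval_palindromicQuartic] at hx
  field_simp
  linear_combination hx

theorem add_inv_add_add_inv_of_isRoot_palindromicQuartic (hx : (palindromicQuartic a b).IsRoot x)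
    (hy : (palindromicQuartic a b).IsRoot y) (hyx : y ≠ x) (hyx' : y ≠ x⁻¹) :
    x + x⁻¹ + (y + y⁻¹) = -a := by
  have hx0 := ne_zero_of_isRoot_palindromicQuartic hx
  have hy0 := ne_zero_of_isRoot_palindromicQuartic hy
  have hne : x + x⁻¹ - (y + y⁻¹) ≠ 0 := by
    have : x + x⁻¹ - (y + y⁻¹) = (x - y) * (y - x⁻¹) / y := by field_simp; ring
    rw [this]
    exact div_ne_zero (mul_ne_zero (sub_ne_zero.2 hyx.symm) (sub_ne_zero.2 hyx')) hy0
  have h := add_inv_sq_add_of_isRoot_palindromicQuartic hx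
  have h' := add_inv_sq_add_of_isRoot_palindromicQuartic hy
  have : (x + x⁻¹ - (y + y⁻¹)) * (x + x⁻¹ + (y + y⁻¹) + a) = 0 := by linear_combination h - h'
  linear_combination (mul_eq_zero.1 this).resolve_left hne

theorem sq_mul_sub_inv_of_isRoot_palindromicQuartic (hx : (palindromicQuartic a b).IsRoot x)
    (hy : (palindromicQuartic a b).IsRoot y) (hyx : y ≠ x) (hyx' : y ≠ x⁻¹) :
    ((x - x⁻¹) * (y - y⁻¹)) ^ 2 = (b + 2) ^ 2 - 4 * a ^ 2 := by
  have hsq : ∀ z : K, z ≠ 0 → (z - z⁻¹) ^ 2 = (z + z⁻¹) ^ 2 - 4 := fun z hz ↦ by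
    linear_combination (-4) * mul_inv_cancel₀ hz
  have hy' : y + y⁻¹ = -a - (x + x⁻¹) := by
    linear_combination add_inv_add_add_inv_of_isRoot_palindromicQuartic hx hy hyx hyx'
  have hb : b = 2 - (x + x⁻¹) ^ 2 - a * (x + x⁻¹) := by
    linear_combination add_inv_sq_add_of_isRoot_palindromicQuartic hx
  rw [mul_pow, hsq x (ne_zero_of_isRoot_palindromicQuartic hx),
    hsq y (ne_zero_of_isRoot_palindromicQuartic hy), hy', hb]
  ring

end Field

theorem exists_eq_mul_mul_and_eq_iff_isSquare {K : Type*} [Field K] [NeZero (2 : K)] {a b : K}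
    (h : b + 2 + 2 * a ≠ 0) :
    (∃ p q t : K, a = p * q * t ∧ b = (p ^ 2 + q ^ 2) * t - 2) ↔
      IsSquare ((b + 2) ^ 2 - 4 * a ^ 2) := by
  constructor
  · rintro ⟨p, q, t, rfl, rfl⟩
    exact ⟨(p ^ 2 - q ^ 2) * t, by ring⟩
  · rintro ⟨m, hm⟩
    -- `t = b + 2 + 2a`, `p + q = 1`, `p - q = m / t`
    obtain ⟨t, ht, rfl⟩ : ∃ t, t ≠ 0 ∧ b = t - 2 - 2 * a := ⟨b + 2 + 2 * a, h, by ring⟩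
    refine ⟨(1 + m / t) / 2, (1 - m / t) / 2, t, ?_, ?_⟩
    · field_simp
      linear_combination -hm
    · field_simp
      linear_combination 2 * hm

theorem isKleinFour_iff {G : Type*} [Group G] :
    IsKleinFour G ↔ Nat.card G = 4 ∧ ∀ σ : G, σ * σ = 1 := by
  refine ⟨fun h ↦ ⟨h.card_four, IsKleinFour.mul_self⟩, fun ⟨hcard, hsq⟩ ↦ ⟨hcard, ?_⟩⟩
  have hdvd := Monoid.exponent_dvd_of_forall_pow_eq_one fun σ ↦ (sq σ).trans (hsq σ)
  have hne : Monoid.exponent G ≠ 1 := fun h1 ↦ by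
    have := Monoid.exp_eq_one_iff.1 h1
    rw [Nat.card_of_subsingleton (1 : G)] at hcard
    omega
  exact ((Nat.dvd_prime Nat.prime_two).1 hdvd).resolve_left hne

theorem isKleinFour_iff_nonempty_mulEquiv {G : Type*} [Group G] :
    IsKleinFour G ↔ Nonempty (G ≃* Multiplicative (ZMod 2 × ZMod 2)) := by
  refine ⟨fun _ ↦ IsKleinFour.nonempty_mulEquiv, fun ⟨f⟩ ↦ ⟨?_, ?_⟩⟩
  · rw [Nat.card_congr f.toEquiv, IsKleinFour.card_four]
  · rw [Monoid.exponent_eq_of_mulEquiv f, IsKleinFour.exponent_two]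

theorem IntermediateField.mem_bot_iff_isSquare {F L : Type*} [Field F] [Field L] [Algebra F L]
    {x : L} {d : F} (hx : x ^ 2 = algebraMap F L d) :
    x ∈ (⊥ : IntermediateField F L) ↔ IsSquare d := by
  constructor
  · intro h
    obtain ⟨m, rfl⟩ := mem_bot.1 h
    refine ⟨m, (algebraMap F L).injective ?_⟩
    rw [← hx, map_mul, sq]
  · rintro ⟨m, rfl⟩
    rw [map_mul, ← sq, sq_eq_sq_iff_eq_or_eq_neg] at hx
    rcases hx with rfl | rfl
    exacts [algebraMap_mem _ m, neg_mem (algebraMap_mem _ m)]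

theorem AlgEquiv.eq_one_of_apply_eq_self {F L : Type*} [Field F] [Field L] [Algebra F L]
    [Algebra.IsAlgebraic F L] {x : L} (hx : F⟮x⟯ = ⊤) {σ : L ≃ₐ[F] L} (hσ : σ x = x) : σ = 1 := by
  have hx' := (adjoin_simple_eq_top_iff_of_isAlgebraic (Algebra.IsAlgebraic.isAlgebraic x)).1 hx
  exact AlgEquiv.coe_toAlgHom_injective (AlgHom.ext_of_adjoin_eq_top hx' (by simpa using hσ))

theorem finrank_adjoin_simple_of_irreducible {F L : Type*} [Field F] [Field L] [Algebra F L]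
    {p : F[X]} (hp : Irreducible p) (hm : p.Monic) {x : L} (hx : aeval x p = 0) :
    Module.finrank F F⟮x⟯ = p.natDegree := by
  rw [adjoin.finrank ⟨p, hm, by rwa [← aeval_def]⟩, ← minpoly.eq_of_irreducible_of_monic hp hx hm]

structure IsInvPairRoots {F L : Type*} [Field F] [Field L] [Algebra F L] (g : F[X]) (α β : L) :
    Prop where
  rootSet_eq : g.rootSet L = {α, α⁻¹, β, β⁻¹}
  inv_ne_left : α⁻¹ ≠ α
  inv_ne_right : β⁻¹ ≠ β
  ne_left : β ≠ α
  ne_inv_left : β ≠ α⁻¹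

section RootSet

variable {F L : Type*} [Field F] [Field L] [Algebra F L] {a b : F}

theorem mem_rootSet_palindromicQuartic {x : L} :
    x ∈ (palindromicQuartic a b).rootSet L ↔
      (palindromicQuartic (algebraMap F L a) (algebraMap F L b)).IsRoot x := by
  rw [mem_rootSet_of_ne (monic_palindromicQuartic a b).ne_zero, IsRoot, ← eval_map_algebraMap,
    map_palindromicQuartic]

theorem exists_isInvPairRoots (h1 : (palindromicQuartic a b).eval 1 ≠ 0)
    (h2 : (palindromicQuartic a b).eval (-1) ≠ 0) (hsep : (palindromicQuartic a b).Separable)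
    (hsplit : ((palindromicQuartic a b).map (algebraMap F L)).Splits) :
    ∃ α β : L, IsInvPairRoots (palindromicQuartic a b) α β := by
  set R := (palindromicQuartic a b).rootSet L
  have hR : R.ncard = 4 := by
    rw [← Nat.card_coe_set_eq, Nat.card_eq_fintype_card, card_rootSet_eq_natDegree hsep hsplit,
      natDegree_palindromicQuartic]
  have hinv : ∀ x ∈ R, x⁻¹ ∈ R := fun x hx ↦ mem_rootSet_palindromicQuartic.2
    (isRoot_palindromicQuartic_inv (mem_rootSet_palindromicQuartic.1 hx))
  have hev : ∀ t : F, (palindromicQuartic a b).eval t ≠ 0 →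
      (palindromicQuartic (algebraMap F L a) (algebraMap F L b)).eval (algebraMap F L t) ≠ 0 :=
    fun t ht ↦ by simpa using (map_ne_zero (algebraMap F L)).2 ht
  have hne : ∀ x ∈ R, x⁻¹ ≠ x := fun x hx ↦
    inv_ne_self_of_isRoot_palindromicQuartic (mem_rootSet_palindromicQuartic.1 hx)
      (by simpa using hev 1 h1) (by simpa using hev (-1) h2)
  obtain ⟨α, hα⟩ := Set.nonempty_of_ncard_ne_zero (hR ▸ four_ne_zero)
  obtain ⟨β, hβ, hβα⟩ := Set.not_subset.1 fun h : R ⊆ {α, α⁻¹} ↦ by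
    have := Set.ncard_le_ncard h
    have := Set.ncard_insert_le α {α⁻¹}
    rw [Set.ncard_singleton] at this
    omega
  simp only [Set.mem_insert_iff, Set.mem_singleton_iff, not_or] at hβα
  refine ⟨α, β, Eq.symm (Set.eq_of_subset_of_ncard_le ?_ ?_ (rootSet_finite _ _)), hne α hα,
    hne β hβ, hβα.1, hβα.2⟩
  · simp only [Set.insert_subset_iff, Set.singleton_subset_iff]
    exact ⟨hα, hinv α hα, hβ, hinv β hβ⟩
  · rw [hR, Set.ncard_eq_four.2 ⟨α, α⁻¹, β, β⁻¹, (hne α hα).symm, Ne.symm hβα.1,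
      fun h ↦ hβα.2 (by rw [h, inv_inv]), Ne.symm hβα.2, inv_injective.ne (Ne.symm hβα.1),
      (hne β hβ).symm, rfl⟩]

end RootSet

namespace IsInvPairRoots

variable {F L : Type*} [Field F] [Field L] [Algebra F L] {g : F[X]} {a b : F} {α β : L}

theorem left_mem (h : IsInvPairRoots g α β) : α ∈ g.rootSet L := by simp [h.rootSet_eq]

theorem right_mem (h : IsInvPairRoots g α β) : β ∈ g.rootSet L := by simp [h.rootSet_eq]

theorem apply_mem (h : IsInvPairRoots g α β) (σ : L ≃ₐ[F] L) {x : L} (hx : x ∈ g.rootSet L) :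
    σ x = α ∨ σ x = α⁻¹ ∨ σ x = β ∨ σ x = β⁻¹ := by
  simpa [h.rootSet_eq] using rootSet_mapsTo (σ : L →ₐ[F] L) hx

theorem mul_sub_inv_ne_zero (h : IsInvPairRoots g α β) : (α - α⁻¹) * (β - β⁻¹) ≠ 0 :=
  mul_ne_zero (sub_ne_zero.2 h.inv_ne_left.symm) (sub_ne_zero.2 h.inv_ne_right.symm)

theorem apply_mul_sub_inv_of_apply_apply_left {σ : L ≃ₐ[F] L} (h : IsInvPairRoots g α β)
    (hσ : σ (σ α) = α) (hfix : σ α = α ↔ σ β = β) :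
    σ ((α - α⁻¹) * (β - β⁻¹)) = (α - α⁻¹) * (β - β⁻¹) := by
  rw [map_mul, map_sub, map_sub, map_inv₀, map_inv₀]
  rcases h.apply_mem σ h.left_mem with h1 | h1 | h1 | h1
  · rw [h1, hfix.1 h1]
  · rcases h.apply_mem σ h.right_mem with h2 | h2 | h2 | h2
    · refine absurd (σ.injective ?_) h.ne_inv_left
      rw [h2, map_inv₀, h1, inv_inv]
    · exact absurd (σ.injective (h2.trans h1.symm)) h.ne_left
    · exact absurd (hfix.2 h2) (h1 ▸ h.inv_ne_left)
    · rw [h1, h2, inv_inv, inv_inv]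
      ring
  · have h2 : σ β = α := by rw [← h1, hσ]
    rw [h1, h2]
    ring
  · have h2 : σ β = α⁻¹ := inv_eq_iff_eq_inv.1 (by rw [← map_inv₀, ← h1, hσ])
    rw [h1, h2, inv_inv, inv_inv]
    ring

theorem apply_apply_left_of_apply_mul_sub_inv [NeZero (2 : L)] {σ : L ≃ₐ[F] L}
    (h : IsInvPairRoots g α β) (he : σ ((α - α⁻¹) * (β - β⁻¹)) = (α - α⁻¹) * (β - β⁻¹)) :
    σ (σ α) = α := by
  have hne : -((α - α⁻¹) * (β - β⁻¹)) ≠ (α - α⁻¹) * (β - β⁻¹) := fun h' ↦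
    h.mul_sub_inv_ne_zero <| (mul_eq_zero.1 (by linear_combination -h')).resolve_left two_ne_zero
  rw [map_mul, map_sub, map_sub, map_inv₀, map_inv₀] at he
  rcases h.apply_mem σ h.left_mem with h1 | h1 | h1 | h1
  · rw [h1, h1]
  · rw [h1, map_inv₀, h1, inv_inv]
  · rcases h.apply_mem σ h.right_mem with h2 | h2 | h2 | h2
    · rw [h1, h2]
    · refine absurd (he.symm.trans ?_) hne.symm
      rw [h1, h2, inv_inv]
      ring
    · exact absurd (σ.injective (h2.trans h1.symm)) h.ne_left
    · refine absurd (σ.injective ?_) h.ne_inv_left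
      rw [h2, map_inv₀, h1]
  · rcases h.apply_mem σ h.right_mem with h2 | h2 | h2 | h2
    · refine absurd (he.symm.trans ?_) hne.symm
      rw [h1, h2, inv_inv]
      ring
    · rw [h1, map_inv₀, h2, inv_inv]
    · refine absurd (σ.injective ?_) h.ne_inv_left
      rw [h2, map_inv₀, h1, inv_inv]
    · exact absurd (σ.injective (h2.trans h1.symm)) h.ne_left

theorem adjoin_left_eq_top [g.IsSplittingField F L] (h : IsInvPairRoots g α β) (hβ : β ∈ F⟮α⟯) :
    F⟮α⟯ = ⊤ := by
  rw [eq_top_iff, ← (isSplittingField_iff_intermediateField.1 ‹_›).2, adjoin_le_iff,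
    h.rootSet_eq]
  have hα : α ∈ F⟮α⟯ := mem_adjoin_simple_self F α
  simp only [Set.insert_subset_iff, Set.singleton_subset_iff, SetLike.mem_coe]
  exact ⟨hα, inv_mem hα, hβ, inv_mem hβ⟩

theorem isRoot_left (h : IsInvPairRoots (palindromicQuartic a b) α β) :
    (palindromicQuartic (algebraMap F L a) (algebraMap F L b)).IsRoot α :=
  mem_rootSet_palindromicQuartic.1 h.left_mem

theorem isRoot_right (h : IsInvPairRoots (palindromicQuartic a b) α β) :
    (palindromicQuartic (algebraMap F L a) (algebraMap F L b)).IsRoot β :=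
  mem_rootSet_palindromicQuartic.1 h.right_mem

theorem sq_mul_sub_inv (h : IsInvPairRoots (palindromicQuartic a b) α β) :
    ((α - α⁻¹) * (β - β⁻¹)) ^ 2 = algebraMap F L ((b + 2) ^ 2 - 4 * a ^ 2) := by
  rw [sq_mul_sub_inv_of_isRoot_palindromicQuartic h.isRoot_left h.isRoot_right h.ne_left
    h.ne_inv_left]
  simp only [map_sub, map_pow, map_add, map_mul, _root_.map_ofNat]

theorem mem_adjoin_left [NeZero (2 : L)] (h : IsInvPairRoots (palindromicQuartic a b) α β)
    (he : (α - α⁻¹) * (β - β⁻¹) ∈ (⊥ : IntermediateField F L)) : β ∈ F⟮α⟯ := by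
  have hα : α ∈ F⟮α⟯ := mem_adjoin_simple_self F α
  have hsum := add_inv_add_add_inv_of_isRoot_palindromicQuartic h.isRoot_left h.isRoot_right
    h.ne_left h.ne_inv_left
  have hβ : β = (-algebraMap F L a - (α + α⁻¹) + (α - α⁻¹) * (β - β⁻¹) / (α - α⁻¹)) / 2 := by
    rw [mul_div_cancel_left₀ _ (sub_ne_zero.2 h.inv_ne_left.symm), eq_div_iff two_ne_zero]
    linear_combination hsum
  rw [hβ]
  have ha : algebraMap F L a ∈ F⟮α⟯ := IntermediateField.algebraMap_mem _ a
  have he' : (α - α⁻¹) * (β - β⁻¹) ∈ F⟮α⟯ := (bot_le : ⊥ ≤ F⟮α⟯) he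
  have h2 : (2 : L) ∈ F⟮α⟯ := ofNat_mem _ 2
  exact div_mem (add_mem (sub_mem (neg_mem ha) (add_mem hα (inv_mem hα)))
    (div_mem he' (sub_mem hα (inv_mem hα)))) h2

end IsInvPairRoots

theorem isKleinFour_gal_palindromicQuartic_iff {F : Type*} [Field F] [NeZero (2 : F)] {a b : F}
    (hg : Irreducible (palindromicQuartic a b)) (hsep : (palindromicQuartic a b).Separable) :
    IsKleinFour (palindromicQuartic a b).Gal ↔ IsSquare ((b + 2) ^ 2 - 4 * a ^ 2) := by
  set g := palindromicQuartic a b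
  set L := g.SplittingField
  have : IsGalois F L := IsGalois.of_separable_splitting_field hsep
  have : NeZero (2 : L) :=
    ⟨by simpa only [_root_.map_ofNat] using (map_ne_zero (algebraMap F L)).2 (two_ne_zero' F)⟩
  obtain ⟨α, β, h⟩ := exists_isInvPairRoots (not_isRoot_of_irreducible_palindromicQuartic hg 1)
    (not_isRoot_of_irreducible_palindromicQuartic hg (-1)) hsep (SplittingField.splits g)
  have htop : ∀ x ∈ g.rootSet L, F⟮x⟯ = ⊤ ↔ Nat.card g.Gal = 4 := fun x hx ↦ by
    have hx4 : Module.finrank F F⟮x⟯ = 4 := by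
      rw [finrank_adjoin_simple_of_irreducible hg (monic_palindromicQuartic a b)
        (mem_rootSet'.1 hx).2, natDegree_palindromicQuartic]
    rw [Gal.card_of_separable hsep]
    refine ⟨fun hxtop ↦ ?_, fun hL ↦ eq_of_le_of_finrank_eq le_top (by rw [hx4, finrank_top', hL])⟩
    rw [← finrank_top', ← hxtop, hx4]
  rw [isKleinFour_iff, ← mem_bot_iff_isSquare h.sq_mul_sub_inv, IsGalois.mem_bot_iff_fixed]
  constructor
  · rintro ⟨h4, hsq⟩ σ
    have hfix : ∀ x ∈ g.rootSet L, σ x = x → σ = 1 := fun x hx ↦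
      AlgEquiv.eq_one_of_apply_eq_self ((htop x hx).2 h4)
    refine h.apply_mul_sub_inv_of_apply_apply_left ?_ ⟨fun h1 ↦ ?_, fun h2 ↦ ?_⟩
    · exact DFunLike.congr_fun (hsq σ) α
    · rw [hfix α h.left_mem h1, AlgEquiv.one_apply]
    · rw [hfix β h.right_mem h2, AlgEquiv.one_apply]
  · intro he
    have hαtop := h.adjoin_left_eq_top (h.mem_adjoin_left ((IsGalois.mem_bot_iff_fixed _).2 he))
    exact ⟨(htop α h.left_mem).1 hαtop, fun σ ↦
      AlgEquiv.eq_one_of_apply_eq_self hαtop (h.apply_apply_left_of_apply_mul_sub_inv (he σ))⟩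

theorem stmt15 (a b : ℚ)
    (hg : Irreducible (X ^ 4 + C a * X ^ 3 + C b * X ^ 2 + C a * X + 1 : ℚ[X])) :
    Nonempty ((X ^ 4 + C a * X ^ 3 + C b * X ^ 2 + C a * X + 1 : ℚ[X]).Gal ≃*
        Multiplicative (ZMod 2 × ZMod 2)) ↔
      ∃ p q t : ℚ, a = p * q * t ∧ b = (p ^ 2 + q ^ 2) * t - 2 := by
  change Irreducible (palindromicQuartic a b) at hg
  change Nonempty ((palindromicQuartic a b).Gal ≃* _) ↔ _
  have h1 : b + 2 + 2 * a ≠ 0 := fun h ↦ not_isRoot_of_irreducible_palindromicQuartic hg 1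
    (by rw [IsRoot, eval_palindromicQuartic]; linear_combination h)
  rw [← isKleinFour_iff_nonempty_mulEquiv, isKleinFour_gal_palindromicQuartic_iff hg hg.separable,
    exists_eq_mul_mul_and_eq_iff_isSquare h1]
end

section
/- Let a, b, p, q, t ∈ ℚ with a ≠ 0, a = p·q·t, and b = (p² + q²)·t − 2, and suppose f(x) = x⁸ + a·x⁶ + b·x⁴ + a·x² + 1 is irreducible over ℚ. Define S₁(x) = x⁴ + 2pqt·x³ + (8 + 2p²t − 4q²t + p²q²t²)·x² + 2pqt·(p²t − 4)·x + (p²t − 4)² and S₂(x) = x⁴ + 2pqt·x³ + (8 + 2q²t − 4p²t + p²q²t²)·x² + 2pqt·(q²t − 4)·x + (q²t − 4)². Then: (1) S₁(x²) is irreducible over ℚ if and only if b + 2 + 2a is not a square in ℚ and q²t − 4 is not a square in ℚ; (2) S₂(x²) is irreducible over ℚ if and only if b + 2 + 2a is not a square in ℚ and p²t − 4 is not a square in ℚ; (3) it is impossible that both p²t − 4 and q²t − 4 are squares in ℚ. -/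
/-!
Put `B = q²t - 4`. Over `ℚ(√t, √B)` the quartic `S₁` splits: its roots are
`γ = -pqt/2 + q√t - √B + (p/2)√t√B` for the four choices of the square roots. When `t`, `B` and
`tB` are not squares, `1, √t, √B, √t√B` are linearly independent over `ℚ`, and a root `z` of
`S₁(x²)` has `z² = γ`. Splitting a rational polynomial `g` of degree at most `4` into even and odd
parts gives `g(z) = E(γ) + z O(γ)` with `deg E ≤ 2`, `deg O ≤ 1`. If `O(γ) ≠ 0` then
`z ∈ ℚ(√t, √B)`, and comparing coordinates shows that `γ` is not a square there unless `t` or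
`(p²t - 4)B` is a rational square; if `O(γ) = 0`, coordinates show that `1, γ, γ²` are independent,
so `g = 0`. Hence `S₁(x²)` has no factor of degree `≤ 4`.

Conversely, `S₁(x²)` factors explicitly when `t` or `B` is a square, and `b + 2 + 2a = (p + q)²t`.
Irreducibility of the palindromic octic rules out the squares `(p²t - 4)(q²t - 4) = a² - 4b + 8`
and `t(q²t - 4)`, again by exhibiting factorizations.
-/

open Polynomial

section Squares

variable {K : Type*} [Field K]

lemma eq_zero_of_sq_eq_mul_sq {r x y : K} (hr : ¬IsSquare r) (h : x ^ 2 = r * y ^ 2) :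
    x = 0 ∧ y = 0 := by
  by_cases hy : y = 0
  · subst hy
    exact ⟨pow_eq_zero_iff two_ne_zero |>.1 (by simpa using h), rfl⟩
  · exact absurd ⟨x / y, by field_simp; linear_combination -h⟩ hr

lemma isSquare_sq_mul_iff {c x : K} (hc : c ≠ 0) : IsSquare (c ^ 2 * x) ↔ IsSquare x :=
  ⟨fun ⟨r, hr⟩ ↦ ⟨r / c, by field_simp; linear_combination hr⟩,
    fun ⟨r, hr⟩ ↦ ⟨c * r, by rw [hr]; ring⟩⟩

end Squares

lemma irreducible_of_forall_aeval_ne_zero {F L : Type*} [Field F] [Field L] [IsAlgClosed L]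
    [Algebra F L] {f : F[X]} (hf : f.Monic) (hf1 : f ≠ 1)
    (h : ∀ z : L, aeval z f = 0 → ∀ g : F[X], g ≠ 0 → g.natDegree ≤ f.natDegree / 2 →
      aeval z g ≠ 0) :
    Irreducible f := by
  rw [hf.irreducible_iff_lt_natDegree_lt hf1]
  rintro g hg hgdeg ⟨k, rfl⟩
  obtain ⟨hpos, hle⟩ := Finset.mem_Ioc.1 hgdeg
  obtain ⟨z, hz⟩ := IsAlgClosed.exists_aeval_eq_zero L g (natDegree_pos_iff_degree_pos.1 hpos).ne'
  exact h z (by rw [map_mul, hz, zero_mul]) g hg.ne_zero hle hz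

lemma not_irreducible_even_octic {R : Type*} [CommRing R] [IsDomain R] {c₆ c₄ c₂ c₀ u v k k' : R}
    (h₆ : u + v = c₆) (h₄ : k + k' + u * v = c₄) (h₂ : u * k' + v * k = c₂) (h₀ : k * k' = c₀) :
    ¬Irreducible (X ^ 8 + C c₆ * X ^ 6 + C c₄ * X ^ 4 + C c₂ * X ^ 2 + C c₀ : R[X]) := by
  have hquartic (a b : R) : ¬IsUnit (X ^ 4 + C a * X ^ 2 + C b : R[X]) := fun hu ↦ by
    have h4 : (X ^ 4 + C a * X ^ 2 + C b : R[X]).natDegree = 4 := by compute_degree!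
    simp [natDegree_eq_zero_of_isUnit hu] at h4
  subst h₆ h₄ h₂ h₀
  intro hirr
  rcases hirr.isUnit_or_isUnit (show _ = (X ^ 4 + C u * X ^ 2 + C k) * (X ^ 4 + C v * X ^ 2 + C k')
    by simp only [map_add, map_mul]; ring) with h | h
  exacts [hquartic _ _ h, hquartic _ _ h]

section Biquadratic

variable {L : Type*} [Field L] [CharZero L] {t B : ℚ} {m β : L}

lemma eq_zero_of_add_mul_sqrt_eq_zero (ht : ¬IsSquare t) (hm : m ^ 2 = t) {x y : ℚ}
    (h : (x : L) + y * m = 0) : x = 0 ∧ y = 0 := by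
  refine eq_zero_of_sq_eq_mul_sq ht (x := x) (y := y) ?_
  have : ((x ^ 2 : ℚ) : L) = ((t * y ^ 2 : ℚ) : L) := by
    push_cast
    linear_combination ((x : L) - y * m) * h + (y : L) ^ 2 * hm
  exact_mod_cast this

lemma eq_zero_of_biquadratic_eq_zero (ht : ¬IsSquare t) (hB : ¬IsSquare B)
    (htB : ¬IsSquare (t * B)) (hm : m ^ 2 = t) (hβ : β ^ 2 = B) {x y z w : ℚ}
    (h : (x : L) + y * m + z * β + w * (m * β) = 0) : x = 0 ∧ y = 0 ∧ z = 0 ∧ w = 0 := by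
  have ht0 : t ≠ 0 := by rintro rfl; exact ht ⟨0, by simp⟩
  -- `h` says `x + y m = -(z + w m) β`; square it and compare along `1, m`
  obtain ⟨h1, h2⟩ := eq_zero_of_add_mul_sqrt_eq_zero ht hm
    (x := x ^ 2 + t * y ^ 2 - B * (z ^ 2 + t * w ^ 2)) (y := 2 * (x * y - B * (z * w))) (by
      push_cast
      linear_combination ((x : L) + y * m - (z + w * m) * β) * h
        - ((y : L) ^ 2 - B * w ^ 2) * hm + ((z : L) + w * m) ^ 2 * hβ)
  have hsq : (x ^ 2 - t * y ^ 2) ^ 2 = (B * (z ^ 2 - t * w ^ 2)) ^ 2 := by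
    linear_combination (x ^ 2 + t * y ^ 2 + B * (z ^ 2 + t * w ^ 2)) * h1
      - 2 * t * (x * y + B * (z * w)) * h2
  rcases sq_eq_sq_iff_eq_or_eq_neg.1 hsq with h3 | h3
  · obtain ⟨rfl, rfl⟩ := eq_zero_of_sq_eq_mul_sq hB (x := x) (y := z)
      (by linear_combination (h1 + h3) / 2)
    obtain ⟨rfl, rfl⟩ := eq_zero_of_sq_eq_mul_sq hB (x := y) (y := w) (by
      apply mul_left_cancel₀ ht0; linear_combination (h1 - h3) / 2)
    simp
  · obtain ⟨rfl, rfl⟩ := eq_zero_of_sq_eq_mul_sq htB (x := x) (y := w)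
      (by linear_combination (h1 + h3) / 2)
    obtain ⟨h4, rfl⟩ := eq_zero_of_sq_eq_mul_sq htB (x := t * y) (y := z)
      (by linear_combination t * (h1 - h3) / 2)
    simp [(mul_eq_zero.1 h4).resolve_left ht0]

open IntermediateField in
lemma mem_adjoin_iff_exists_biquadratic (hm : m ^ 2 = t) (hβ : β ^ 2 = B) {u : L} :
    u ∈ ℚ⟮m, β⟯ ↔ ∃ x y z w : ℚ, u = x + y * m + z * β + w * (m * β) := by
  refine ⟨fun hu ↦ ?_, ?_⟩
  · have halg {v : L} {s : ℚ} (hv : v ^ 2 = s) : IsAlgebraic ℚ v :=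
      ⟨X ^ 2 - C s, X_pow_sub_C_ne_zero two_pos s, by simp [hv]⟩
    rw [← mem_toSubalgebra, adjoin_toSubalgebra_of_isAlgebraic (by
      rintro v (rfl | rfl | -); exacts [halg hm, halg hβ])] at hu
    induction hu using Algebra.adjoin_induction with
    | mem v hv =>
      rcases hv with rfl | rfl
      exacts [⟨0, 1, 0, 0, by simp⟩, ⟨0, 0, 1, 0, by simp⟩]
    | algebraMap r => exact ⟨r, 0, 0, 0, by simp⟩
    | add u v _ _ hu hv =>
      obtain ⟨x, y, z, w, rfl⟩ := hu
      obtain ⟨x', y', z', w', rfl⟩ := hv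
      exact ⟨x + x', y + y', z + z', w + w', by push_cast; ring⟩
    | mul u v _ _ hu hv =>
      obtain ⟨x, y, z, w, rfl⟩ := hu
      obtain ⟨x', y', z', w', rfl⟩ := hv
      refine ⟨x * x' + t * y * y' + B * z * z' + t * B * w * w',
        x * y' + y * x' + B * (z * w' + w * z'), x * z' + z * x' + t * (y * w' + w * y'),
        x * w' + w * x' + y * z' + z * y', ?_⟩
      push_cast
      linear_combination (y * y' + (y * w' + w * y') * β + w * w' * β ^ 2 : L) * hm
        + (z * z' + t * w * w' + (z * w' + w * z') * m : L) * hβ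
  · rintro ⟨x, y, z, w, rfl⟩
    have hm' : m ∈ ℚ⟮m, β⟯ := subset_adjoin _ _ (by simp)
    have hβ' : β ∈ ℚ⟮m, β⟯ := subset_adjoin _ _ (by simp)
    have hr (r : ℚ) : (r : L) ∈ ℚ⟮m, β⟯ := SubfieldClass.ratCast_mem _ r
    exact add_mem (add_mem (add_mem (hr x) (mul_mem (hr y) hm')) (mul_mem (hr z) hβ'))
      (mul_mem (hr w) (mul_mem hm' hβ'))

end Biquadratic

noncomputable def S₁ (p q t : ℚ) : ℚ[X] :=
  X ^ 4 + C (2 * p * q * t) * X ^ 3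
    + C (8 + 2 * p ^ 2 * t - 4 * q ^ 2 * t + p ^ 2 * q ^ 2 * t ^ 2) * X ^ 2
    + C (2 * p * q * t * (p ^ 2 * t - 4)) * X + C ((p ^ 2 * t - 4) ^ 2)

lemma S₁_comp_X_sq (p q t : ℚ) : (S₁ p q t).comp (X ^ 2) = X ^ 8 + C (2 * p * q * t) * X ^ 6 +
    C (8 + 2 * p ^ 2 * t - 4 * q ^ 2 * t + p ^ 2 * q ^ 2 * t ^ 2) * X ^ 4 +
    C (2 * p * q * t * (p ^ 2 * t - 4)) * X ^ 2 + C ((p ^ 2 * t - 4) ^ 2) := by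
  simp only [S₁, add_comp, mul_comp, C_comp, X_pow_comp, X_comp]
  ring

lemma not_irreducible_S₁_comp_X_sq_of_isSquare_t {p q t : ℚ} (ht : IsSquare t) :
    ¬Irreducible ((S₁ p q t).comp (X ^ 2)) := by
  obtain ⟨e, rfl⟩ := ht
  rw [S₁_comp_X_sq]
  exact not_irreducible_even_octic (u := p * q * e ^ 2 - 2 * e * q) (v := p * q * e ^ 2 + 2 * e * q)
    (k := ((p * q * e ^ 2 - 2 * e * q) ^ 2 - (q ^ 2 * e ^ 2 - 4) * (e * p - 2) ^ 2) / 4)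
    (k' := ((p * q * e ^ 2 + 2 * e * q) ^ 2 - (q ^ 2 * e ^ 2 - 4) * (e * p + 2) ^ 2) / 4)
    (by ring) (by ring) (by ring) (by ring)

lemma not_irreducible_S₁_comp_X_sq_of_isSquare_sub_four {p q t : ℚ}
    (hB : IsSquare (q ^ 2 * t - 4)) :
    ¬Irreducible ((S₁ p q t).comp (X ^ 2)) := by
  obtain ⟨r, hr⟩ := hB
  rw [S₁_comp_X_sq]
  exact not_irreducible_even_octic (u := p * q * t + 2 * r) (v := p * q * t - 2 * r)
    (k := p ^ 2 * t - 4) (k' := p ^ 2 * t - 4)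
    (by ring) (by linear_combination 4 * hr) (by ring) (by ring)

section RootsOfS₁

variable {L : Type*} [Field L] [CharZero L] {p q t : ℚ} {m β : L}

def rootS₁ (p q t : ℚ) (m β : L) : L := -(p * q * t) / 2 + q * m - β + p / 2 * (m * β)

lemma aeval_S₁ (hm : m ^ 2 = t) (hβ : β ^ 2 = ((q ^ 2 * t - 4 : ℚ) : L)) (y : L) :
    aeval y (S₁ p q t) = (y - rootS₁ p q t m β) * (y - rootS₁ p q t (-m) (-β))
      * ((y - rootS₁ p q t (-m) β) * (y - rootS₁ p q t m (-β))) := by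
  push_cast at hβ
  set R : L := (y + p * q * t / 2) ^ 2 + p ^ 2 / 4 * t * (q ^ 2 * t - 4) - (2 * q ^ 2 * t - 4)
  set V : L := p * y + p ^ 2 * q * t / 2 - 2 * q
  have hpair (μ ν : L) (hμ : μ ^ 2 = t) (hν : ν ^ 2 = q ^ 2 * t - 4) :
      (y - rootS₁ p q t μ ν) * (y - rootS₁ p q t (-μ) (-ν)) = R - V * (μ * ν) := by
    simp only [rootS₁, R, V]
    linear_combination (p ^ 2 / 4 * ν ^ 2 - q ^ 2) * hμ + (p ^ 2 / 4 * t - 1) * hν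
  have hpair' := hpair (-m) β (by rw [neg_sq, hm]) hβ
  rw [neg_neg] at hpair'
  rw [hpair m β hm hβ, hpair']
  simp only [S₁, map_add, map_mul, map_pow, aeval_X, aeval_C, eq_ratCast]
  push_cast
  linear_combination V ^ 2 * β ^ 2 * hm + V ^ 2 * t * hβ

lemma eq_zero_of_quadratic_rootS₁_eq_zero (ht : ¬IsSquare t) (hB : ¬IsSquare (q ^ 2 * t - 4))
    (htB : ¬IsSquare (t * (q ^ 2 * t - 4))) (hm : m ^ 2 = t)
    (hβ : β ^ 2 = ((q ^ 2 * t - 4 : ℚ) : L)) (hp : p ≠ 0) {c₀ c₁ c₂ : ℚ}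
    (h : c₀ + c₁ * rootS₁ p q t m β + c₂ * rootS₁ p q t m β ^ 2 = 0) :
    c₀ = 0 ∧ c₁ = 0 ∧ c₂ = 0 := by
  obtain ⟨-, h1, h2, -⟩ := eq_zero_of_biquadratic_eq_zero ht hB htB hm hβ
    (x := c₀ - c₁ * (p * q * t / 2)
      + c₂ * (p ^ 2 * q ^ 2 * t ^ 2 / 4 + t * q ^ 2 + (q ^ 2 * t - 4) * (1 + t * p ^ 2 / 4)))
    (y := c₁ * q - c₂ * p * (2 * q ^ 2 * t - 4)) (z := -c₁ + 2 * p * q * t * c₂)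
    (w := c₁ * p / 2 - c₂ * (p ^ 2 * q * t / 2 + 2 * q)) (by
      simp only [rootS₁] at h
      push_cast at hβ ⊢
      linear_combination h - c₂ * (q ^ 2 + p * q * β + p ^ 2 / 4 * β ^ 2 : L) * hm
        - c₂ * (1 + t * p ^ 2 / 4 - p * m : L) * hβ)
  have hc₂ : c₂ = 0 := by
    have : 4 * p * c₂ = 0 := by linear_combination h1 + q * h2
    simpa [hp] using this
  subst hc₂
  obtain rfl : c₁ = 0 := by linarith
  simpa using h

lemma sq_ne_rootS₁ (ht : ¬IsSquare t) (hB : ¬IsSquare (q ^ 2 * t - 4))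
    (htB : ¬IsSquare (t * (q ^ 2 * t - 4))) (hm : m ^ 2 = t)
    (hβ : β ^ 2 = ((q ^ 2 * t - 4 : ℚ) : L))
    (hAB : ¬IsSquare ((p ^ 2 * t - 4) * (q ^ 2 * t - 4))) (x y z w : ℚ) :
    ((x : L) + y * m + z * β + w * (m * β)) ^ 2 ≠ rootS₁ p q t m β := by
  intro h
  set B := q ^ 2 * t - 4
  obtain ⟨h1, h2, h3, h4⟩ := eq_zero_of_biquadratic_eq_zero ht hB htB hm hβ
    (x := x ^ 2 + t * y ^ 2 + B * z ^ 2 + t * B * w ^ 2 + p * q * t / 2)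
    (y := 2 * (x * y + B * (z * w)) - q) (z := 2 * (x * z + t * (y * w)) + 1)
    (w := 2 * (x * w + y * z) - p / 2) (by
      simp only [rootS₁] at h
      push_cast
      linear_combination h - (y ^ 2 + 2 * y * w * β + w ^ 2 * β ^ 2 : L) * hm
        - (z ^ 2 + t * w ^ 2 + 2 * z * w * m : L) * hβ)
  -- `P + Q β` is the norm of `x + y m + z β + w m β` down to `ℚ(β)`; its square is the norm
  -- `p²t - 4` of the root
  set P := x ^ 2 + B * z ^ 2 - t * y ^ 2 - t * B * w ^ 2
  set Q := 2 * (x * z - t * (y * w))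
  have hPQ : P * Q = 0 := by
    linear_combination (2 * (x * z + t * (y * w))) * h1 - (p * q * t / 2) * h3
      - t * (2 * (x * w + y * z)) * h2 - t * q * h4
  have hnorm : P ^ 2 + B * Q ^ 2 = p ^ 2 * t - 4 := by
    linear_combination (x ^ 2 + t * y ^ 2 + B * z ^ 2 + t * B * w ^ 2 - p * q * t / 2) * h1
      - t * (2 * (x * y + B * (z * w)) + q) * h2 + B * (2 * (x * z + t * (y * w)) - 1) * h3
      - t * B * (2 * (x * w + y * z) + p / 2) * h4
  rcases mul_eq_zero.1 hPQ with hP | hQ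
  · exact hAB ⟨B * Q, by linear_combination (-B) * hnorm + B * P * hP⟩
  · have hxz : x * z = -1 / 4 := by linear_combination (hQ + h3) / 4
    have htyw : t * y * w = -1 / 4 := by linear_combination (h3 - hQ) / 4
    exact ht ⟨(4 * t * x * y - q * t) / 2, by
      linear_combination 4 * t * B * (t * y * w) * hxz - t * B * htyw - 2 * t ^ 2 * x * y * h2⟩

open IntermediateField in
lemma aeval_ne_zero_of_sq_eq_rootS₁ (ht : ¬IsSquare t) (hB : ¬IsSquare (q ^ 2 * t - 4))
    (htB : ¬IsSquare (t * (q ^ 2 * t - 4))) (hm : m ^ 2 = t)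
    (hβ : β ^ 2 = ((q ^ 2 * t - 4 : ℚ) : L)) (hp : p ≠ 0)
    (hAB : ¬IsSquare ((p ^ 2 * t - 4) * (q ^ 2 * t - 4))) {z : L}
    (hz : z ^ 2 = rootS₁ p q t m β) {g : ℚ[X]} (hg : g ≠ 0) (hdeg : g.natDegree ≤ 4) :
    aeval z g ≠ 0 := by
  intro hgz
  set γ := rootS₁ p q t m β
  set c := g.coeff
  have hsplit : (c 0 + c 2 * γ + c 4 * γ ^ 2) + z * (c 1 + c 3 * γ) = 0 := by
    rw [aeval_eq_sum_range' (Nat.lt_succ_of_le hdeg)] at hgz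
    simp only [Finset.sum_range_succ, Finset.sum_range_zero, Rat.smul_def] at hgz
    linear_combination hgz - (c 2 + c 3 * z + c 4 * (z ^ 2 + γ) : L) * hz
  by_cases hodd : (c 1 : L) + c 3 * γ = 0
  · obtain ⟨h1, h3, -⟩ := eq_zero_of_quadratic_rootS₁_eq_zero ht hB htB hm hβ hp (c₂ := 0)
      (by simpa using hodd)
    obtain ⟨h0, h2, h4⟩ := eq_zero_of_quadratic_rootS₁_eq_zero ht hB htB hm hβ hp
      (by simpa [hodd] using hsplit)
    refine hg (Polynomial.ext fun i ↦ ?_)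
    rcases le_or_gt i 4 with hi | hi
    · interval_cases i <;> assumption
    · exact coeff_eq_zero_of_natDegree_lt (hdeg.trans_lt hi)
  · have hr (r : ℚ) : (r : L) ∈ ℚ⟮m, β⟯ := SubfieldClass.ratCast_mem _ r
    have hγ : γ ∈ ℚ⟮m, β⟯ := (mem_adjoin_iff_exists_biquadratic hm hβ).2
      ⟨-(p * q * t / 2), q, -1, p / 2, by simp only [γ, rootS₁]; push_cast; ring⟩
    have hzmem : z ∈ ℚ⟮m, β⟯ := by
      rw [show z = -(c 0 + c 2 * γ + c 4 * γ ^ 2) / (c 1 + c 3 * γ) by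
        rw [eq_div_iff hodd]; linear_combination hsplit]
      exact div_mem (neg_mem (add_mem (add_mem (hr _) (mul_mem (hr _) hγ))
        (mul_mem (hr _) (pow_mem hγ 2)))) (add_mem (hr _) (mul_mem (hr _) hγ))
    obtain ⟨x, y, w, v, rfl⟩ := (mem_adjoin_iff_exists_biquadratic hm hβ).1 hzmem
    exact sq_ne_rootS₁ ht hB htB hm hβ hAB x y w v hz

end RootsOfS₁

theorem irreducible_S₁_comp_X_sq {p q t : ℚ} (hp : p ≠ 0) (ht : ¬IsSquare t)
    (hB : ¬IsSquare (q ^ 2 * t - 4)) (htB : ¬IsSquare (t * (q ^ 2 * t - 4)))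
    (hAB : ¬IsSquare ((p ^ 2 * t - 4) * (q ^ 2 * t - 4))) :
    Irreducible ((S₁ p q t).comp (X ^ 2)) := by
  have hmonic : ((S₁ p q t).comp (X ^ 2)).Monic :=
    Monic.comp (by unfold S₁; monicity!) (monic_X_pow 2) (by simp)
  have hdeg : ((S₁ p q t).comp (X ^ 2)).natDegree = 8 := by
    rw [natDegree_comp, natDegree_X_pow,
      show (S₁ p q t).natDegree = 4 by unfold S₁; compute_degree!]
  refine irreducible_of_forall_aeval_ne_zero (L := ℂ) hmonic (by rintro h; simp [h] at hdeg)
    fun z hz g hg hgdeg ↦ ?_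
  obtain ⟨m, hm⟩ := IsAlgClosed.exists_pow_nat_eq (t : ℂ) two_pos
  obtain ⟨β, hβ⟩ := IsAlgClosed.exists_pow_nat_eq ((q ^ 2 * t - 4 : ℚ) : ℂ) two_pos
  have hm' : (-m) ^ 2 = t := by rw [neg_sq, hm]
  have hβ' : (-β) ^ 2 = ((q ^ 2 * t - 4 : ℚ) : ℂ) := by rw [neg_sq, hβ]
  rw [aeval_comp, aeval_X_pow, aeval_S₁ hm hβ] at hz
  simp only [mul_eq_zero, sub_eq_zero] at hz
  rw [hdeg] at hgdeg
  rcases hz with (hz | hz) | (hz | hz)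
  · exact aeval_ne_zero_of_sq_eq_rootS₁ ht hB htB hm hβ hp hAB hz hg hgdeg
  · exact aeval_ne_zero_of_sq_eq_rootS₁ ht hB htB hm' hβ' hp hAB hz hg hgdeg
  · exact aeval_ne_zero_of_sq_eq_rootS₁ ht hB htB hm' hβ hp hAB hz hg hgdeg
  · exact aeval_ne_zero_of_sq_eq_rootS₁ ht hB htB hm hβ' hp hAB hz hg hgdeg

section Palindromic

variable {a b : ℚ}

lemma not_isSquare_of_irreducible_palindromic
    (hf : Irreducible (X ^ 8 + C a * X ^ 6 + C b * X ^ 4 + C a * X ^ 2 + 1 : ℚ[X])) :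
    ¬IsSquare (a ^ 2 - 4 * b + 8) := by
  rintro ⟨n, hn⟩
  rw [← C_1] at hf
  exact not_irreducible_even_octic (u := (a + n) / 2) (v := (a - n) / 2) (k := 1) (k' := 1)
    (by ring) (by linear_combination hn / 4) (by ring) (by ring) hf

lemma not_isSquare_mul_of_irreducible_palindromic {p q t : ℚ} (ha : a = p * q * t)
    (hb : b = (p ^ 2 + q ^ 2) * t - 2)
    (hf : Irreducible (X ^ 8 + C a * X ^ 6 + C b * X ^ 4 + C a * X ^ 2 + 1 : ℚ[X])) :
    ¬IsSquare (t * (q ^ 2 * t - 4)) := by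
  rintro ⟨n, hn⟩
  rw [← C_1] at hf
  exact not_irreducible_even_octic (u := p * (q * t + n) / 2) (v := p * (q * t - n) / 2)
    (k := (q ^ 2 * t - 2 + q * n) / 2) (k' := (q ^ 2 * t - 2 - q * n) / 2)
    (by rw [ha]; ring) (by rw [hb]; linear_combination p ^ 2 / 4 * hn)
    (by rw [ha]; linear_combination p * q / 2 * hn) (by linear_combination q ^ 2 / 4 * hn) hf

theorem irreducible_S₁_comp_X_sq_iff {p q t : ℚ} (hp : p ≠ 0) (ha : a = p * q * t)
    (hb : b = (p ^ 2 + q ^ 2) * t - 2)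
    (hf : Irreducible (X ^ 8 + C a * X ^ 6 + C b * X ^ 4 + C a * X ^ 2 + 1 : ℚ[X])) :
    Irreducible ((S₁ p q t).comp (X ^ 2)) ↔
      ¬IsSquare (b + 2 + 2 * a) ∧ ¬IsSquare (q ^ 2 * t - 4) := by
  have hAB : ¬IsSquare ((p ^ 2 * t - 4) * (q ^ 2 * t - 4)) := by
    rw [show (p ^ 2 * t - 4) * (q ^ 2 * t - 4) = a ^ 2 - 4 * b + 8 by rw [ha, hb]; ring]
    exact not_isSquare_of_irreducible_palindromic hf
  have hpq : p + q ≠ 0 := fun h ↦ hAB ⟨p ^ 2 * t - 4, by rw [show q = -p by linarith]; ring⟩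
  have hsq : IsSquare (b + 2 + 2 * a) ↔ IsSquare t := by
    rw [show b + 2 + 2 * a = (p + q) ^ 2 * t by rw [ha, hb]; ring, isSquare_sq_mul_iff hpq]
  refine ⟨fun hirr ↦ ⟨fun hs ↦ ?_, fun hs ↦ ?_⟩, fun ⟨h₁, h₂⟩ ↦ ?_⟩
  · exact not_irreducible_S₁_comp_X_sq_of_isSquare_t (hsq.1 hs) hirr
  · exact not_irreducible_S₁_comp_X_sq_of_isSquare_sub_four hs hirr
  · exact irreducible_S₁_comp_X_sq hp (mt hsq.2 h₁) h₂
      (not_isSquare_mul_of_irreducible_palindromic ha hb hf) hAB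

end Palindromic

theorem stmt17 (a b p q t : ℚ) (ha : a ≠ 0) (hapqt : a = p * q * t)
    (hb : b = (p ^ 2 + q ^ 2) * t - 2)
    (hf : Irreducible (X ^ 8 + C a * X ^ 6 + C b * X ^ 4 + C a * X ^ 2 + 1 : ℚ[X])) :
    (Irreducible (X ^ 8 + C (2 * p * q * t) * X ^ 6 +
        C (8 + 2 * p ^ 2 * t - 4 * q ^ 2 * t + p ^ 2 * q ^ 2 * t ^ 2) * X ^ 4 +
        C (2 * p * q * t * (p ^ 2 * t - 4)) * X ^ 2 + C ((p ^ 2 * t - 4) ^ 2) : ℚ[X]) ↔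
      (¬ ∃ r : ℚ, b + 2 + 2 * a = r ^ 2) ∧ ¬ ∃ r : ℚ, q ^ 2 * t - 4 = r ^ 2) ∧
    (Irreducible (X ^ 8 + C (2 * p * q * t) * X ^ 6 +
        C (8 + 2 * q ^ 2 * t - 4 * p ^ 2 * t + p ^ 2 * q ^ 2 * t ^ 2) * X ^ 4 +
        C (2 * p * q * t * (q ^ 2 * t - 4)) * X ^ 2 + C ((q ^ 2 * t - 4) ^ 2) : ℚ[X]) ↔
      (¬ ∃ r : ℚ, b + 2 + 2 * a = r ^ 2) ∧ ¬ ∃ r : ℚ, p ^ 2 * t - 4 = r ^ 2) ∧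
    ¬ ((∃ r : ℚ, p ^ 2 * t - 4 = r ^ 2) ∧ (∃ r : ℚ, q ^ 2 * t - 4 = r ^ 2)) := by
  have hp : p ≠ 0 := by rintro rfl; simp [hapqt] at ha
  have hq : q ≠ 0 := by rintro rfl; simp [hapqt] at ha
  simp only [← isSquare_iff_exists_sq, ← S₁_comp_X_sq]
  refine ⟨irreducible_S₁_comp_X_sq_iff hp hapqt hb hf, ?_, fun ⟨hA, hB⟩ ↦ ?_⟩
  · convert irreducible_S₁_comp_X_sq_iff (p := q) (q := p) (t := t) hq (by rw [hapqt]; ring)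
      (by rw [hb]; ring) hf using 3
    rw [S₁_comp_X_sq]
    ring_nf
  · refine not_isSquare_of_irreducible_palindromic hf ?_
    rw [show a ^ 2 - 4 * b + 8 = (p ^ 2 * t - 4) * (q ^ 2 * t - 4) by rw [hapqt, hb]; ring]
    exact hA.mul hB
end
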